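/- arXiv:2012.13437 — 10 statements merged into one kernel-verified Lean document; each statement's English description precedes it below -/
import Mathlib

section
/- Let Y₀ be an infinite-dimensional Banach space over ℝ or ℂ, let E be a closed finite-codimensional subspace of Y₀ (i.e., the quotient Y₀/E is finite-dimensional), and let F be a finite-codimensional subspace of the dual Y₀* that is closed in the weak* topology. Then there exist e ∈ E with ‖e‖ ≤ 1 and h ∈ F with ‖h‖ ≤ 3 such that h(e) = 1. -/
open NormedSpace

section Aux

variable {𝕜 : Type} [RCLike 𝕜] {Y₀ : Type}
    [NormedAddCommGroup Y₀] [NormedSpace 𝕜 Y₀]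

/-- Evaluation at a point, as a linear map on the dual space. -/
noncomputable def stmt1Ev (y : Y₀) : StrongDual 𝕜 Y₀ →ₗ[𝕜] 𝕜 where
  toFun f := f y
  map_add' _ _ := rfl
  map_smul' _ _ := rfl

/-- A continuous linear functional on the weak* dual vanishing on the kernels of finitely many
evaluations. -/
theorem stmt1_finset (φ : WeakDual 𝕜 Y₀ →L[ℝ] ℝ) :
    ∃ s : Finset Y₀, ∀ f : WeakDual 𝕜 Y₀, (∀ y ∈ s, f y = 0) → φ f = 0 := by
  have h0 : Set.preimage φ (Metric.ball (0:ℝ) 1) ∈ nhds (0 : WeakDual 𝕜 Y₀) := by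
    apply (φ.continuous.continuousAt (x := (0 : WeakDual 𝕜 Y₀))).preimage_mem_nhds
    simp [Metric.ball_mem_nhds]
  obtain ⟨U, hU, hUsub⟩ := (LinearMap.hasBasis_weakBilin (topDualPairing 𝕜 Y₀)).mem_iff.1 h0
  obtain ⟨s, r, hr, rfl⟩ := (SeminormFamily.basisSets_iff _).1 hU
  refine ⟨s, fun f hf => ?_⟩
  by_contra hne
  have hmem : ∀ t : ℝ, t • f ∈ Seminorm.ball (s.sup (LinearMap.toSeminormFamily (topDualPairing 𝕜 Y₀))) 0 r := by
    intro t
    erw [Seminorm.mem_ball_zero]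
    apply Seminorm.finset_sup_apply_lt hr
    intro y hy
    have : (t • f) y = t • (f y) := rfl
    simp [LinearMap.toSeminormFamily, LinearMap.toSeminorm]
    show ‖(t • f) y‖ < r
    rw [this, hf y hy]
    simpa using hr
  have := hUsub (hmem (2 / φ f))
  change φ ((2 / φ f) • f) ∈ Metric.ball (0:ℝ) 1 at this
  simp only [id, Set.mem_preimage, map_smul, smul_eq_mul, Metric.mem_ball, dist_zero_right,
    Real.norm_eq_abs] at this
  rw [div_mul_cancel₀ _ hne] at this
  norm_num at this

/-- Every continuous linear functional on the weak* dual is of the form `f ↦ re (f y₀)`. -/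
theorem stmt1_repr (φ : WeakDual 𝕜 Y₀ →L[ℝ] ℝ) (s : Finset Y₀)
    (hs : ∀ f : WeakDual 𝕜 Y₀, (∀ y ∈ s, f y = 0) → φ f = 0) :
    ∃ y₀ : Y₀, ∀ f : WeakDual 𝕜 Y₀, φ f = RCLike.re (f y₀) := by
  classical
  set L : (↥s × Bool) → (WeakDual 𝕜 Y₀ →ₗ[ℝ] ℝ) := fun p =>
    { toFun := fun f => if p.2 then RCLike.im (f (p.1 : Y₀)) else RCLike.re (f (p.1 : Y₀))
      map_add' := by intro f g; cases p.2 <;> simp [show ∀ y, (f + g) y = f y + g y from fun _ => rfl]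
      map_smul' := by
        intro t f
        have : ∀ y, (t • f) y = t • (f y) := fun _ => rfl
        cases p.2 <;> simp [this, RCLike.smul_re, RCLike.smul_im] } with hL
  have hker : ⨅ i, LinearMap.ker (L i) ≤ LinearMap.ker (φ.toLinearMap.restrictScalars ℝ) := by
    intro f hf
    simp only [Submodule.mem_iInf, LinearMap.mem_ker] at hf ⊢
    apply hs
    intro y hy
    have h1 := hf (⟨y, hy⟩, false)
    have h2 := hf (⟨y, hy⟩, true)
    simp [hL] at h1 h2
    exact RCLike.ext (by simpa using h1) (by simpa using h2)
  have hspan := mem_span_of_iInf_ker_le_ker hker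
  obtain ⟨c, hc⟩ := (Submodule.mem_span_range_iff_exists_fun ℝ).1 hspan
  refine ⟨∑ i : ↥s × Bool, (if i.2 then -(c i : 𝕜) * RCLike.I else (c i : 𝕜)) • (i.1 : Y₀), fun f => ?_⟩
  have hφf : φ f = (∑ i : ↥s × Bool, c i • L i) f := by
    rw [hc]; rfl
  rw [hφf]
  have hfy : f (∑ i : ↥s × Bool, (if i.2 then -(c i : 𝕜) * RCLike.I else (c i : 𝕜)) • (i.1 : Y₀))
      = ∑ i : ↥s × Bool, (if i.2 then -(c i : 𝕜) * RCLike.I else (c i : 𝕜)) * f (i.1 : Y₀) := by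
    rw [map_sum]
    congr 1; ext i
    rw [map_smul]; simp [smul_eq_mul]
  rw [hfy, map_sum, LinearMap.sum_apply]
  congr 1; ext i
  rcases i with ⟨y, b⟩
  cases b
  · simp [hL, LinearMap.smul_apply, smul_eq_mul, RCLike.re_ofReal_mul]
  · simp only [hL, LinearMap.smul_apply, LinearMap.coe_mk, AddHom.coe_mk, if_true,
      smul_eq_mul, Bool.cond_true]
    rw [mul_assoc, show (-((c (y, true)):𝕜)) = ((-(c (y, true)) : ℝ) : 𝕜) by push_cast; ring,
      RCLike.re_ofReal_mul, RCLike.I_mul_re]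
    ring

set_option maxHeartbeats 1000000 in
/-- A weak*-closed subspace of the dual contains every functional vanishing on its
pre-annihilator. -/
theorem stmt1_weakstar (F : Subspace 𝕜 (StrongDual 𝕜 Y₀))
    (hFclosed : IsClosed (StrongDual.toWeakDual '' (F : Set (StrongDual 𝕜 Y₀))))
    (g : StrongDual 𝕜 Y₀) (hg : ∀ y : Y₀, (∀ f ∈ F, f y = 0) → g y = 0) : g ∈ F := by
  by_contra hgF
  haveI : LocallyConvexSpace ℝ (WeakDual 𝕜 Y₀) :=
    WeakBilin.locallyConvexSpace (B := topDualPairing 𝕜 Y₀)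
  have hconv : Convex ℝ (StrongDual.toWeakDual '' (F : Set (StrongDual 𝕜 Y₀))) := by
    have : StrongDual.toWeakDual '' (F : Set (StrongDual 𝕜 Y₀)) =
        ((F.restrictScalars ℝ).map (StrongDual.toWeakDual.restrictScalars ℝ).toLinearMap :
          Set (WeakDual 𝕜 Y₀)) := by
      simp [Submodule.map_coe]
    rw [this]
    exact Submodule.convex _
  obtain ⟨φ, u, hFlt, hgu⟩ := geometric_hahn_banach_closed_point hconv hFclosed (by
    intro hx
    obtain ⟨f, hf, hfg⟩ := hx
    exact hgF (by rwa [StrongDual.toWeakDual.injective hfg] at hf))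
  have hu0 : 0 < u := by
    have := hFlt _ ⟨0, F.zero_mem, rfl⟩
    simpa using this
  have hF0 : ∀ f ∈ F, φ (StrongDual.toWeakDual f) = 0 := by
    intro f hfF
    by_contra hne
    have hmem : ∀ t : ℝ, φ (t • (StrongDual.toWeakDual f)) < u := by
      intro t
      apply hFlt
      exact ⟨(t : ℝ) • f, F.smul_of_tower_mem t hfF, rfl⟩
    have := hmem ((u + 1) / φ (StrongDual.toWeakDual f))
    rw [map_smul, smul_eq_mul, div_mul_cancel₀ _ hne] at this
    linarith
  obtain ⟨s, hs⟩ := stmt1_finset φ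
  obtain ⟨y₀, hy₀⟩ := stmt1_repr φ s hs
  have hy₀V : ∀ f ∈ F, f y₀ = 0 := by
    intro f hfF
    have key : ∀ c : 𝕜, RCLike.re (c * f y₀) = 0 := by
      intro c
      have hcF : c • f ∈ F := F.smul_mem c hfF
      have := hF0 (c • f) hcF
      rw [hy₀ (StrongDual.toWeakDual (c • f))] at this
      rwa [show (StrongDual.toWeakDual (c • f)) y₀ = c * f y₀ from rfl] at this
    have h1 := key 1
    have h2 := key RCLike.I
    rw [one_mul] at h1
    rw [RCLike.I_mul_re] at h2
    exact RCLike.ext (by simpa using h1) (by simpa using h2)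
  have hgy₀ : g y₀ = 0 := hg y₀ hy₀V
  have : φ (StrongDual.toWeakDual g) = 0 := by
    rw [hy₀ (StrongDual.toWeakDual g), show (StrongDual.toWeakDual g) y₀ = g y₀ from rfl, hgy₀, map_zero]
  linarith

/-- In an infinite-dimensional subspace, one can find a vector of norm at most one whose
distance to a given finite-dimensional subspace is at least `1/3`. -/
theorem stmt1_riesz [CompleteSpace Y₀] (E V : Subspace 𝕜 Y₀) (hE : ¬ FiniteDimensional 𝕜 ↥E)
    [FiniteDimensional 𝕜 ↥V] :
    ∃ e ∈ E, ‖e‖ ≤ 1 ∧ ∀ v ∈ V, (1/3:ℝ) ≤ ‖e - v‖ := by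
  by_contra hcon
  push_neg at hcon
  have hc : (1:ℝ) < ‖((5/4 : ℝ) : 𝕜)‖ := by
    rw [RCLike.norm_ofReal, abs_of_pos] <;> norm_num
  have hR : ‖((5/4 : ℝ) : 𝕜)‖ < (13/10 : ℝ) := by
    rw [RCLike.norm_ofReal, abs_of_pos] <;> norm_num
  obtain ⟨x, hxnorm, hxsep⟩ := exists_seq_norm_le_one_le_norm_sub' hc hR hE
  set e : ℕ → Y₀ := fun n => ((10/13 : ℝ) : 𝕜) • (x n : Y₀) with he
  have heE : ∀ n, e n ∈ E := fun n => E.smul_mem _ (x n).2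
  have henorm : ∀ n, ‖e n‖ ≤ 1 := by
    intro n
    rw [he, norm_smul, RCLike.norm_ofReal]
    have : ‖(x n : Y₀)‖ ≤ 13/10 := hxnorm n
    rw [abs_of_pos (by norm_num)]
    nlinarith [norm_nonneg (x n : Y₀)]
  have hesep : ∀ m n, m ≠ n → (10/13 : ℝ) ≤ ‖e m - e n‖ := by
    intro m n hmn
    rw [he]
    simp only [← smul_sub, norm_smul, RCLike.norm_ofReal]
    have h1 : (1:ℝ) ≤ ‖(x m : Y₀) - (x n : Y₀)‖ := by
      rw [show (x m : Y₀) - (x n : Y₀) = ((x m - x n : ↥E) : Y₀) by push_cast; ring,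
        ← Submodule.coe_norm]
      exact hxsep hmn
    rw [abs_of_pos (by norm_num)]
    nlinarith
  have hv : ∀ n, ∃ v ∈ V, ‖e n - v‖ < 1/3 := fun n => hcon (e n) (heE n) (henorm n)
  choose v hvV hvlt using hv
  set v' : ℕ → ↥V := fun n => ⟨v n, hvV n⟩ with hv'
  have hv'ball : ∀ n, v' n ∈ Metric.closedBall (0 : ↥V) 2 := by
    intro n
    rw [Metric.mem_closedBall, dist_zero_right]
    have : ‖v' n‖ = ‖v n‖ := rfl
    rw [this]
    calc ‖v n‖ ≤ ‖v n - e n‖ + ‖e n‖ := by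
            have h := norm_add_le (v n - e n) (e n)
            rwa [sub_add_cancel] at h
      _ ≤ 1/3 + 1 := by
            have := hvlt n; rw [norm_sub_rev] at this; linarith [henorm n]
      _ ≤ 2 := by norm_num
  obtain ⟨a, -, ψ, hψ, hconv⟩ := (isCompact_closedBall (0 : ↥V) 2).tendsto_subseq hv'ball
  rw [Metric.tendsto_atTop] at hconv
  obtain ⟨N, hN⟩ := hconv (2/39) (by norm_num)
  have h1 := hN N le_rfl
  have h2 := hN (N+1) (by omega)
  have hvv : ‖v (ψ N) - v (ψ (N+1))‖ < 4/39 := by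
    have : dist (v' (ψ N)) (v' (ψ (N+1))) < 4/39 := by
      calc dist (v' (ψ N)) (v' (ψ (N+1))) ≤ dist (v' (ψ N)) a + dist (v' (ψ (N+1))) a :=
            dist_triangle_right _ _ _
        _ < 2/39 + 2/39 := by
            exact add_lt_add (by simpa using h1) (by simpa using h2)
        _ = 4/39 := by norm_num
    rw [Subtype.dist_eq, dist_eq_norm] at this
    exact this
  have hne : ψ N ≠ ψ (N+1) := fun h => by
    have := hψ.injective h; omega
  have : ‖e (ψ N) - e (ψ (N+1))‖ < 10/13 := by
    calc ‖e (ψ N) - e (ψ (N+1))‖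
        ≤ ‖e (ψ N) - v (ψ N)‖ + ‖v (ψ N) - v (ψ (N+1))‖ + ‖v (ψ (N+1)) - e (ψ (N+1))‖ := by
          have := norm_add₃_le (a := e (ψ N) - v (ψ N)) (b := v (ψ N) - v (ψ (N+1)))
            (c := v (ψ (N+1)) - e (ψ (N+1)))
          simpa using this
      _ < 1/3 + 4/39 + 1/3 := by
          have h3 := hvlt (ψ N)
          have h4 := hvlt (ψ (N+1))
          rw [norm_sub_rev] at h4
          linarith
      _ ≤ 10/13 := by norm_num
  linarith [hesep _ _ hne]

/-- Given a vector of norm at most one at distance at least `1/3` from a finite-dimensional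
subspace `V`, there is a functional of norm at most `3` vanishing on `V` and equal to `1`
at the vector. -/
theorem stmt1_hb [CompleteSpace Y₀] (V : Subspace 𝕜 Y₀) [FiniteDimensional 𝕜 ↥V] (e : Y₀)
    (hdist : ∀ v ∈ V, (1/3:ℝ) ≤ ‖e - v‖) :
    ∃ h : StrongDual 𝕜 Y₀, (∀ y ∈ V, h y = 0) ∧ ‖h‖ ≤ 3 ∧ h e = 1 := by
  haveI : IsClosed (V : Set Y₀) := Submodule.closed_of_finiteDimensional V
  set q : Y₀ ⧸ V := Submodule.Quotient.mk e with hq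
  have hqe : (1/3:ℝ) ≤ ‖q‖ := by
    by_contra hlt
    push_neg at hlt
    obtain ⟨m, hm, hmlt⟩ := Submodule.Quotient.norm_mk_lt q (ε := 1/3 - ‖q‖) (by linarith)
    have hV : e - m ∈ V := by
      rw [← Submodule.Quotient.eq]
      exact hm.symm
    have := hdist (e - m) hV
    simp only [sub_sub_cancel] at this
    linarith
  have hqne : q ≠ 0 := by
    intro h0
    rw [h0, norm_zero] at hqe
    linarith
  obtain ⟨g, hg1, hg2⟩ := exists_dual_vector 𝕜 q (norm_ne_zero_iff.mpr hqne)
  set mkCLM : Y₀ →L[𝕜] (Y₀ ⧸ V) :=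
    LinearMap.mkContinuous V.mkQ 1
      (fun x => by simpa using Submodule.Quotient.norm_mk_le V x) with hmk
  refine ⟨((‖q‖⁻¹ : ℝ) : 𝕜) • (g.comp mkCLM), ?_, ?_, ?_⟩
  · intro y hy
    have : mkCLM y = 0 := by
      simp [hmk, LinearMap.mkContinuous_apply, Submodule.Quotient.mk_eq_zero, hy]
    simp [this]
  · apply ContinuousLinearMap.opNorm_le_bound _ (by norm_num : (0:ℝ) ≤ 3)
    intro x
    rw [ContinuousLinearMap.smul_apply, norm_smul, RCLike.norm_ofReal,
      abs_of_nonneg (inv_nonneg.2 (norm_nonneg _))]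
    have h1 : ‖(g.comp mkCLM) x‖ ≤ ‖x‖ := by
      calc ‖(g.comp mkCLM) x‖ ≤ ‖g‖ * ‖mkCLM x‖ := g.le_opNorm _
        _ = ‖mkCLM x‖ := by rw [hg1, one_mul]
        _ ≤ ‖x‖ := by simpa [hmk] using Submodule.Quotient.norm_mk_le V x
    have h2 : ‖q‖⁻¹ ≤ 3 := by
      rw [inv_le_comm₀ (by linarith) (by norm_num)]
      linarith
    exact mul_le_mul h2 h1 (norm_nonneg _) (by norm_num)
  · have heval : (((‖q‖⁻¹:ℝ):𝕜) • (g.comp mkCLM)) e = ((‖q‖⁻¹:ℝ):𝕜) * g q := rfl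
    rw [heval, hg2, ← RCLike.ofReal_mul, inv_mul_cancel₀ (by linarith : ‖q‖ ≠ 0)]
    simp

end Aux

/-- For an infinite-dimensional Banach space `Y₀`, a closed finite-codimensional subspace
`E ⊆ Y₀`, and a weak*-closed finite-codimensional subspace `F ⊆ Y₀*`, there exist `e ∈ E`
with `‖e‖ ≤ 1` and `h ∈ F` with `‖h‖ ≤ 3` such that `h e = 1`. -/
theorem stmt_1 {𝕜 : Type} [RCLike 𝕜] {Y₀ : Type}
    [NormedAddCommGroup Y₀] [NormedSpace 𝕜 Y₀] [CompleteSpace Y₀]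
    (hinf : ¬ FiniteDimensional 𝕜 Y₀)
    (E : Subspace 𝕜 Y₀) (hEclosed : IsClosed (E : Set Y₀))
    (hEcodim : FiniteDimensional 𝕜 (Y₀ ⧸ E))
    (F : Subspace 𝕜 (StrongDual 𝕜 Y₀))
    (hFclosed : IsClosed (StrongDual.toWeakDual '' (F : Set (StrongDual 𝕜 Y₀))))
    (hFcodim : FiniteDimensional 𝕜 (StrongDual 𝕜 Y₀ ⧸ F)) :
    ∃ e ∈ E, ‖e‖ ≤ 1 ∧ ∃ h ∈ F, ‖h‖ ≤ 3 ∧ h e = 1 := by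
  classical
  -- the pre-annihilator of `F`
  set V : Subspace 𝕜 Y₀ :=
    { carrier := {y | ∀ f ∈ F, f y = 0}
      add_mem' := fun {a b} ha hb f hf => by
        rw [map_add, ha f hf, hb f hf, add_zero]
      zero_mem' := fun f _ => map_zero f
      smul_mem' := fun c a ha f hf => by
        rw [map_smul, ha f hf, smul_zero] } with hVdef
  have hVmem : ∀ y : Y₀, y ∈ V ↔ ∀ f ∈ F, f y = 0 := fun y => Iff.rfl
  -- `V` is finite-dimensional
  haveI hVfin : FiniteDimensional 𝕜 ↥V := by
    set T : ↥V →ₗ[𝕜] Module.Dual 𝕜 (StrongDual 𝕜 Y₀ ⧸ F) :=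
      { toFun := fun y => F.liftQ (stmt1Ev (𝕜 := 𝕜) (y : Y₀))
          (fun f hf => by simpa [stmt1Ev] using ((hVmem y).1 y.2) f hf)
        map_add' := by
          intro y z
          apply F.linearMap_qext
          ext f
          simp [stmt1Ev]
        map_smul' := by
          intro c y
          apply F.linearMap_qext
          ext f
          simp [stmt1Ev] } with hT
    have hinj : Function.Injective T := by
      rw [← LinearMap.ker_eq_bot, Submodule.eq_bot_iff]
      rintro ⟨y, hy⟩ hker
      rw [LinearMap.mem_ker] at hker
      ext
      by_contra hy0
      obtain ⟨g, hg1, hg2⟩ := exists_dual_vector 𝕜 y (by simpa using hy0)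
      have : T ⟨y, hy⟩ (Submodule.Quotient.mk g) = 0 := by rw [hker]; rfl
      rw [hT] at this
      simp only [LinearMap.coe_mk, AddHom.coe_mk, Submodule.liftQ_apply] at this
      rw [show (stmt1Ev (𝕜 := 𝕜) y) g = g y from rfl, hg2] at this
      simp at this
      exact hy0 (by simpa using this)
    exact FiniteDimensional.of_injective T hinj
  -- `E` is infinite-dimensional
  have hEinf : ¬ FiniteDimensional 𝕜 ↥E := by
    intro hEfin
    obtain ⟨f⟩ := quotient_prod_linearEquiv E
    exact hinf (Module.Finite.equiv f)
  -- find a suitable `e`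
  obtain ⟨e, heE, henorm, hedist⟩ := stmt1_riesz E V hEinf
  -- find a suitable `h`
  obtain ⟨h, hV0, hnorm, heval⟩ := stmt1_hb V e hedist
  refine ⟨e, heE, henorm, h, ?_, hnorm, heval⟩
  exact stmt1_weakstar F hFclosed h (fun y hy => hV0 y ((hVmem y).2 hy))
end

section
/- Let X and Y be Banach spaces over 𝕂 ∈ {ℝ, ℂ}, let B : X × Y → 𝕂 be a continuous bilinear form with ‖B‖ ≤ 1 (i.e., |B(x,y)| ≤ ‖x‖‖y‖ for all x, y), and let (x_n)_{n=1}^m and (y_n)_{n=1}^m be finite sequences in X and Y respectively. Then ∑_{n=1}^m |B(x_n, y_n)| ≤ ‖(x_n)_{n=1}^m‖_1^w · ‖(y_n)_{n=1}^m‖_1^w. -/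
open NormedSpace
open scoped ENNReal

/-- The weakly `p`-summing norm of a finite sequence in a normed space, with the convention
`‖(x_i)‖_∞^w = max_i ‖x_i‖` when `p = ∞`. -/
noncomputable def weakSummingNorm (𝕜 : Type) [RCLike 𝕜] {X : Type} [NormedAddCommGroup X]
    [NormedSpace 𝕜 X] (p : ℝ≥0∞) {m : ℕ} (x : Fin m → X) : ℝ :=
  if p = ∞ then ⨆ i, ‖x i‖
  else sSup {r : ℝ | ∃ f : StrongDual 𝕜 X, ‖f‖ ≤ 1 ∧
    r = (∑ i, ‖f (x i)‖ ^ p.toReal) ^ (1 / p.toReal)}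

section Aux

variable {𝕜 : Type} [RCLike 𝕜] {X : Type} [NormedAddCommGroup X] [NormedSpace 𝕜 X]

lemma weakSummingNorm_one_eq {m : ℕ} (x : Fin m → X) :
    weakSummingNorm 𝕜 1 x
      = sSup {r : ℝ | ∃ f : StrongDual 𝕜 X, ‖f‖ ≤ 1 ∧ r = ∑ i, ‖f (x i)‖} := by
  simp [weakSummingNorm]

lemma bddAbove_weakSet {m : ℕ} (x : Fin m → X) :
    BddAbove {r : ℝ | ∃ f : StrongDual 𝕜 X, ‖f‖ ≤ 1 ∧ r = ∑ i, ‖f (x i)‖} := by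
  refine ⟨∑ i, ‖x i‖, ?_⟩
  rintro r ⟨f, hf, rfl⟩
  refine Finset.sum_le_sum fun i _ => ?_
  calc ‖f (x i)‖ ≤ ‖f‖ * ‖x i‖ := f.le_opNorm _
    _ ≤ 1 * ‖x i‖ := by
        exact mul_le_mul_of_nonneg_right hf (norm_nonneg _)
    _ = ‖x i‖ := one_mul _

lemma norm_sum_smul_le_weakSummingNorm {m : ℕ} (x : Fin m → X) (ε : Fin m → 𝕜)
    (hε : ∀ n, ‖ε n‖ ≤ 1) :
    ‖∑ n, ε n • x n‖ ≤ weakSummingNorm 𝕜 1 x := by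
  rw [weakSummingNorm_one_eq]
  by_cases hv : (∑ n, ε n • x n) = 0
  · rw [hv, norm_zero]
    exact le_csSup (bddAbove_weakSet x) ⟨0, by simp⟩
  · obtain ⟨g, hg1, hgv⟩ := exists_dual_vector 𝕜 _ (norm_ne_zero_iff.mpr hv)
    calc ‖∑ n, ε n • x n‖ = ‖g (∑ n, ε n • x n)‖ := by rw [hgv]; simp
      _ ≤ ∑ n, ‖g (ε n • x n)‖ := by rw [map_sum]; exact norm_sum_le _ _
      _ ≤ ∑ n, ‖g (x n)‖ := by
          refine Finset.sum_le_sum fun n _ => ?_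
          rw [map_smul, norm_smul]
          calc ‖ε n‖ * ‖g (x n)‖ ≤ 1 * ‖g (x n)‖ :=
                mul_le_mul_of_nonneg_right (hε n) (norm_nonneg _)
            _ = ‖g (x n)‖ := one_mul _
      _ ≤ _ := le_csSup (bddAbove_weakSet x) ⟨g, hg1.le, rfl⟩

lemma weakSummingNorm_one_nonneg {m : ℕ} (x : Fin m → X) :
    0 ≤ weakSummingNorm 𝕜 1 x := by
  rw [weakSummingNorm_one_eq]
  exact le_csSup (bddAbove_weakSet x) ⟨0, by simp⟩

/-- Rademacher signs as scalars. -/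
noncomputable def rsign (𝕜 : Type) [RCLike 𝕜] (b : Bool) : 𝕜 := if b then 1 else -1

lemma norm_rsign (b : Bool) : ‖rsign 𝕜 b‖ = 1 := by
  cases b <;> simp [rsign]

lemma rsign_not (b : Bool) : rsign 𝕜 (!b) = - rsign 𝕜 b := by
  cases b <;> simp [rsign]

lemma rsign_mul_self (b : Bool) : rsign 𝕜 b * rsign 𝕜 b = 1 := by
  cases b <;> simp [rsign]

lemma rademacher_orth {m : ℕ} (n k : Fin m) :
    ∑ r : Fin m → Bool, rsign 𝕜 (r n) * rsign 𝕜 (r k)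
      = if n = k then ((2 : 𝕜) ^ m) else 0 := by
  classical
  by_cases hnk : n = k
  · subst hnk
    simp only [if_pos rfl]
    rw [Finset.sum_congr rfl fun r _ => rsign_mul_self (r n)]
    simp [Finset.card_univ]
  · rw [if_neg hnk]
    have hkn : k ≠ n := fun h => hnk h.symm
    let e : (Fin m → Bool) ≃ (Fin m → Bool) :=
      ⟨fun r => Function.update r n (!(r n)), fun r => Function.update r n (!(r n)),
        fun r => by
          ext i
          by_cases hi : i = n
          · subst hi; simp
          · simp [Function.update_of_ne hi],
        fun r => by
          ext i
          by_cases hi : i = n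
          · subst hi; simp
          · simp [Function.update_of_ne hi]⟩
    have key : ∑ r : Fin m → Bool, rsign 𝕜 (r n) * rsign 𝕜 (r k)
        = ∑ r : Fin m → Bool, -(rsign 𝕜 (r n) * rsign 𝕜 (r k)) := by
      rw [← Equiv.sum_comp e (fun r => rsign 𝕜 (r n) * rsign 𝕜 (r k))]
      refine Finset.sum_congr rfl fun r _ => ?_
      show rsign 𝕜 ((Function.update r n (!(r n))) n) * rsign 𝕜 ((Function.update r n (!(r n))) k)
          = -(rsign 𝕜 (r n) * rsign 𝕜 (r k))
      rw [Function.update_self, Function.update_of_ne hkn, rsign_not, neg_mul]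
    have h0 : (2 : 𝕜) • (∑ r : Fin m → Bool, rsign 𝕜 (r n) * rsign 𝕜 (r k)) = 0 := by
      rw [two_smul]
      nth_rewrite 2 [key]
      simp
    rcases smul_eq_zero.mp h0 with h | h
    · exact absurd h two_ne_zero
    · exact h

end Aux

/-- For a continuous bilinear form `B` on `X × Y` with `‖B‖ ≤ 1`,
`∑_n |B(x_n, y_n)| ≤ ‖(x_n)‖_1^w ‖(y_n)‖_1^w`; that is,
`‖(x_n ⊗ y_n)‖_{π,1}^w ≤ ‖(x_n)‖_1^w ‖(y_n)‖_1^w`. -/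
theorem stmt_6 {𝕜 : Type} [RCLike 𝕜] {X Y : Type}
    [NormedAddCommGroup X] [NormedSpace 𝕜 X] [CompleteSpace X]
    [NormedAddCommGroup Y] [NormedSpace 𝕜 Y] [CompleteSpace Y]
    (B : X →L[𝕜] Y →L[𝕜] 𝕜) (hB : ∀ (a : X) (b : Y), ‖B a b‖ ≤ ‖a‖ * ‖b‖)
    (m : ℕ) (x : Fin m → X) (y : Fin m → Y) :
    ∑ n, ‖B (x n) (y n)‖ ≤ weakSummingNorm 𝕜 1 x * weakSummingNorm 𝕜 1 y := by
  classical
  set η : Fin m → 𝕜 := fun n =>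
    if B (x n) (y n) = 0 then 1 else (‖B (x n) (y n)‖ : 𝕜) / B (x n) (y n) with hη
  have hηnorm : ∀ n, ‖η n‖ = 1 := by
    intro n
    by_cases h : B (x n) (y n) = 0
    · simp [hη, h]
    · simp only [hη, if_neg h]
      rw [norm_div, RCLike.norm_ofReal, abs_norm, div_self (norm_ne_zero_iff.mpr h)]
  have hηmul : ∀ n, η n * B (x n) (y n) = (‖B (x n) (y n)‖ : 𝕜) := by
    intro n
    by_cases h : B (x n) (y n) = 0
    · simp [hη, h]
    · simp only [hη, if_neg h]
      rw [div_mul_cancel₀ _ h]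
  -- expansion of the bilinear form on sign-combinations
  have expand : ∀ (c d : Fin m → 𝕜),
      B (∑ n, c n • x n) (∑ k, d k • y k)
        = ∑ n, ∑ k, c n * d k * B (x n) (y k) := by
    intro c d
    simp only [map_sum, map_smul, ContinuousLinearMap.sum_apply, ContinuousLinearMap.smul_apply,
      smul_eq_mul, Finset.mul_sum]
    rw [Finset.sum_comm]
    exact Finset.sum_congr rfl fun n _ => Finset.sum_congr rfl fun k _ => by ring
  -- the key averaging identity
  have key : ∑ r : Fin m → Bool,
      B (∑ n, (rsign 𝕜 (r n) * η n) • x n) (∑ k, rsign 𝕜 (r k) • y k)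
        = (2 : 𝕜) ^ m * ∑ n, (‖B (x n) (y n)‖ : 𝕜) := by
    have : ∀ r : Fin m → Bool,
        B (∑ n, (rsign 𝕜 (r n) * η n) • x n) (∑ k, rsign 𝕜 (r k) • y k)
          = ∑ n, ∑ k, (rsign 𝕜 (r n) * rsign 𝕜 (r k)) * (η n * B (x n) (y k)) := by
      intro r
      rw [expand]
      refine Finset.sum_congr rfl fun n _ => Finset.sum_congr rfl fun k _ => by ring
    rw [Finset.sum_congr rfl fun r _ => this r]
    rw [Finset.sum_comm]
    have : ∀ n : Fin m, ∑ r : Fin m → Bool,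
        ∑ k, (rsign 𝕜 (r n) * rsign 𝕜 (r k)) * (η n * B (x n) (y k))
          = (2 : 𝕜) ^ m * (‖B (x n) (y n)‖ : 𝕜) := by
      intro n
      rw [Finset.sum_comm]
      have : ∀ k : Fin m, ∑ r : Fin m → Bool,
          (rsign 𝕜 (r n) * rsign 𝕜 (r k)) * (η n * B (x n) (y k))
            = (if n = k then (2:𝕜)^m else 0) * (η n * B (x n) (y k)) := by
        intro k
        rw [← Finset.sum_mul, rademacher_orth]
      rw [Finset.sum_congr rfl fun k _ => this k]
      have := hηmul n
      simp only [ite_mul, zero_mul, Finset.sum_ite_eq, Finset.mem_univ, if_pos, if_true]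
      rw [this]
    rw [Finset.sum_congr rfl fun n _ => this n, ← Finset.mul_sum]
  -- take norms
  have h2m : (0:ℝ) < 2 ^ m := by positivity
  have hnorm : (2:ℝ) ^ m * ∑ n, ‖B (x n) (y n)‖
      ≤ (2:ℝ) ^ m * (weakSummingNorm 𝕜 1 x * weakSummingNorm 𝕜 1 y) := by
    have lhs_eq : (2:ℝ) ^ m * ∑ n, ‖B (x n) (y n)‖
        = ‖(2 : 𝕜) ^ m * ∑ n, (‖B (x n) (y n)‖ : 𝕜)‖ := by
      have h1 : (∑ n, ((‖B (x n) (y n)‖ : ℝ) : 𝕜))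
          = (((∑ n, ‖B (x n) (y n)‖ : ℝ)) : 𝕜) := by push_cast; rfl
      rw [h1, norm_mul, norm_pow, RCLike.norm_ofReal,
        abs_of_nonneg (Finset.sum_nonneg fun n _ => norm_nonneg _)]
      norm_num
    rw [lhs_eq, ← key]
    calc ‖∑ r : Fin m → Bool,
        B (∑ n, (rsign 𝕜 (r n) * η n) • x n) (∑ k, rsign 𝕜 (r k) • y k)‖
        ≤ ∑ r : Fin m → Bool,
          ‖B (∑ n, (rsign 𝕜 (r n) * η n) • x n) (∑ k, rsign 𝕜 (r k) • y k)‖ :=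
          norm_sum_le _ _
      _ ≤ ∑ _r : Fin m → Bool, weakSummingNorm 𝕜 1 x * weakSummingNorm 𝕜 1 y := by
          refine Finset.sum_le_sum fun r _ => ?_
          calc ‖B (∑ n, (rsign 𝕜 (r n) * η n) • x n) (∑ k, rsign 𝕜 (r k) • y k)‖
              ≤ ‖∑ n, (rsign 𝕜 (r n) * η n) • x n‖ * ‖∑ k, rsign 𝕜 (r k) • y k‖ :=
                hB _ _
            _ ≤ weakSummingNorm 𝕜 1 x * weakSummingNorm 𝕜 1 y := by
                refine mul_le_mul ?_ ?_ (norm_nonneg _) (weakSummingNorm_one_nonneg x)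
                · exact norm_sum_smul_le_weakSummingNorm x _ fun n => by
                    rw [norm_mul, norm_rsign, hηnorm, mul_one]
                · exact norm_sum_smul_le_weakSummingNorm y _ fun k =>
                    (norm_rsign (r k)).le
      _ = (2:ℝ)^m * (weakSummingNorm 𝕜 1 x * weakSummingNorm 𝕜 1 y) := by
          rw [Finset.sum_const, Finset.card_univ, Fintype.card_fun]
          simp [nsmul_eq_mul]
  exact le_of_mul_le_mul_left hnorm h2m
end

section
/- Let X be a normed space over 𝕂 ∈ {ℝ, ℂ} and let K be a subset of the closed unit ball of X* that is 1-norming, i.e., ‖x‖ = sup_{f ∈ K} |f(x)| for every x ∈ X. Then for every 1 ≤ p < ∞ and every finite sequence (x_n)_{n=1}^m in X, sup { (∑_{n=1}^m |f(x_n)|^p)^{1/p} : f ∈ X*, ‖f‖ ≤ 1 } = sup { (∑_{n=1}^m |f(x_n)|^p)^{1/p} : f ∈ K }; that is, the weakly p-summing norm of (x_n)_{n=1}^m can be computed by taking the supremum over K only. -/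
open NormedSpace

private lemma key_holder {m : ℕ} (p : ℝ) (hp : 1 ≤ p) (t u : Fin m → ℝ)
    (ht : ∀ i, 0 ≤ t i) (hu : ∀ i, 0 ≤ u i) :
    ∑ i, (if t i = 0 then 0 else t i ^ (p - 1)) * u i
      ≤ (∑ i, t i ^ p) ^ (1 - 1 / p) * (∑ i, u i ^ p) ^ (1 / p) := by
  have hp0 : (0 : ℝ) < p := lt_of_lt_of_le one_pos hp
  have h := Real.inner_le_weight_mul_Lp_of_nonneg (Finset.univ : Finset (Fin m)) hp
    (fun i => t i ^ p) (fun i => if t i = 0 then 0 else u i / t i)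
    (fun i => Real.rpow_nonneg (ht i) p)
    (fun i => by split_ifs with h
                 · exact le_refl 0
                 · exact div_nonneg (hu i) (ht i))
  simp only [one_div] at h ⊢
  have hL : ∑ i, t i ^ p * (if t i = 0 then 0 else u i / t i)
      = ∑ i, (if t i = 0 then 0 else t i ^ (p - 1)) * u i := by
    refine Finset.sum_congr rfl fun i _ => ?_
    by_cases h0 : t i = 0
    · simp [h0]
    · have hlt : 0 < t i := lt_of_le_of_ne (ht i) (Ne.symm h0)
      simp only [h0, if_false]
      rw [Real.rpow_sub_one h0]
      field_simp
  have hR : ∑ i, t i ^ p * (if t i = 0 then 0 else u i / t i) ^ p ≤ ∑ i, u i ^ p := by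
    refine Finset.sum_le_sum fun i _ => ?_
    by_cases h0 : t i = 0
    · simp only [h0, if_true]
      rw [Real.zero_rpow hp0.ne', mul_zero]
      exact Real.rpow_nonneg (hu i) p
    · have hlt : 0 < t i := lt_of_le_of_ne (ht i) (Ne.symm h0)
      simp only [h0, if_false]
      rw [Real.div_rpow (hu i) (ht i)]
      rw [mul_div_cancel₀]
      exact ne_of_gt (Real.rpow_pos_of_pos hlt p)
  calc ∑ i, (if t i = 0 then 0 else t i ^ (p - 1)) * u i
      = ∑ i, t i ^ p * (if t i = 0 then 0 else u i / t i) := hL.symm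
    _ ≤ (∑ i, t i ^ p) ^ (1 - p⁻¹)
        * (∑ i, t i ^ p * (if t i = 0 then 0 else u i / t i) ^ p) ^ p⁻¹ := h
    _ ≤ (∑ i, t i ^ p) ^ (1 - p⁻¹) * (∑ i, u i ^ p) ^ p⁻¹ := by
        refine mul_le_mul_of_nonneg_left ?_ ?_
        · refine Real.rpow_le_rpow (Finset.sum_nonneg fun i _ => ?_) hR
            (inv_nonneg.2 hp0.le)
          refine mul_nonneg (Real.rpow_nonneg (ht i) p) (Real.rpow_nonneg ?_ p)
          split_ifs with h
          · exact le_refl 0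
          · exact div_nonneg (hu i) (ht i)
        · exact Real.rpow_nonneg (Finset.sum_nonneg fun i _ =>
            Real.rpow_nonneg (ht i) p) _

/-- If `K` is a 1-norming subset of the closed dual unit ball of a normed space `X`, then for
every `1 ≤ p < ∞` the weakly `p`-summing norm of a finite sequence can be computed by taking
the supremum over `K` only. -/
theorem stmt_7 {𝕜 : Type} [RCLike 𝕜] {X : Type}
    [NormedAddCommGroup X] [NormedSpace 𝕜 X]
    (K : Set (StrongDual 𝕜 X)) (hKball : ∀ f ∈ K, ‖f‖ ≤ 1)
    (hKnorming : ∀ x : X, ‖x‖ = sSup {r : ℝ | ∃ f ∈ K, r = ‖f x‖})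
    (p : ℝ) (hp : 1 ≤ p) (m : ℕ) (x : Fin m → X) :
    sSup {r : ℝ | ∃ f : StrongDual 𝕜 X, ‖f‖ ≤ 1 ∧ r = (∑ i, ‖f (x i)‖ ^ p) ^ (1 / p)}
      = sSup {r : ℝ | ∃ f ∈ K, r = (∑ i, ‖f (x i)‖ ^ p) ^ (1 / p)} := by
  have hp0 : (0 : ℝ) < p := lt_of_lt_of_le one_pos hp
  set A := {r : ℝ | ∃ f : StrongDual 𝕜 X, ‖f‖ ≤ 1 ∧ r = (∑ i, ‖f (x i)‖ ^ p) ^ (1 / p)} with hA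
  set B := {r : ℝ | ∃ f ∈ K, r = (∑ i, ‖f (x i)‖ ^ p) ^ (1 / p)} with hB
  -- uniform bound
  have hbound : ∀ f : StrongDual 𝕜 X, ‖f‖ ≤ 1 →
      (∑ i, ‖f (x i)‖ ^ p) ^ (1 / p) ≤ (∑ i, ‖x i‖ ^ p) ^ (1 / p) := by
    intro f hf
    refine Real.rpow_le_rpow (Finset.sum_nonneg fun i _ => by positivity)
      (Finset.sum_le_sum fun i _ => ?_) (by positivity)
    refine Real.rpow_le_rpow (norm_nonneg _) ?_ hp0.le
    calc ‖f (x i)‖ ≤ ‖f‖ * ‖x i‖ := f.le_opNorm _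
      _ ≤ 1 * ‖x i‖ := by gcongr
      _ = ‖x i‖ := one_mul _
  have hAbdd : BddAbove A := by
    refine ⟨(∑ i, ‖x i‖ ^ p) ^ (1 / p), ?_⟩
    rintro r ⟨f, hf, rfl⟩
    exact hbound f hf
  have hBbdd : BddAbove B := by
    refine ⟨(∑ i, ‖x i‖ ^ p) ^ (1 / p), ?_⟩
    rintro r ⟨f, hfK, rfl⟩
    exact hbound f (hKball f hfK)
  have hSB : ∀ f ∈ K, (∑ i, ‖f (x i)‖ ^ p) ^ (1 / p) ≤ sSup B := fun f hf =>
    le_csSup hBbdd ⟨f, hf, rfl⟩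
  have hSB0 : 0 ≤ sSup B := by
    rcases Set.eq_empty_or_nonempty K with hK | ⟨g, hg⟩
    · simp [hB, hK, Real.sSup_empty]
    · exact le_trans (by positivity) (hSB g hg)
  refine le_antisymm ?_ ?_
  · -- main direction
    refine Real.sSup_le ?_ hSB0
    rintro r ⟨f, hf, rfl⟩
    -- notation
    set t : Fin m → ℝ := fun i => ‖f (x i)‖ with ht
    show (∑ i, t i ^ p) ^ (1 / p) ≤ sSup B
    have htnn : ∀ i, 0 ≤ t i := fun i => norm_nonneg _
    have hT0 : (0:ℝ) ≤ ∑ i, t i ^ p := Finset.sum_nonneg fun i _ => by positivity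
    rcases eq_or_lt_of_le hT0 with hTz | hTpos
    · rw [← hTz, Real.zero_rpow (by positivity)]
      exact hSB0
    -- construct y
    set s : Fin m → 𝕜 := fun i => (starRingEnd 𝕜) (f (x i)) / ((‖f (x i)‖ : ℝ) : 𝕜) with hs
    set a : Fin m → 𝕜 := fun i => ((t i ^ (p - 1) : ℝ) : 𝕜) * s i with ha
    set y : X := ∑ i, a i • x i with hy
    have hanorm : ∀ i, ‖a i‖ ≤ (if t i = 0 then 0 else t i ^ (p - 1)) := by
      intro i
      by_cases h0 : t i = 0
      · have hz : f (x i) = 0 := by rwa [ht, norm_eq_zero] at h0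
        simp [ha, hs, hz, h0]
      · simp only [h0, if_false, ha, norm_mul]
        have h1 : ‖((t i ^ (p - 1) : ℝ) : 𝕜)‖ = t i ^ (p - 1) := by
          rw [RCLike.norm_ofReal, abs_of_nonneg (Real.rpow_nonneg (htnn i) _)]
        have h2 : ‖s i‖ ≤ 1 := by
          rw [hs]
          simp only [norm_div, RCLike.norm_conj, RCLike.norm_ofReal, abs_norm]
          exact div_self_le_one _
        calc ‖((t i ^ (p - 1) : ℝ) : 𝕜)‖ * ‖s i‖ ≤ t i ^ (p - 1) * 1 := by
              rw [h1]; exact mul_le_mul_of_nonneg_left h2 (by positivity)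
          _ = t i ^ (p - 1) := mul_one _
    have hfy : f y = ((∑ i, t i ^ p : ℝ) : 𝕜) := by
      rw [hy, map_sum, RCLike.ofReal_sum]
      refine Finset.sum_congr rfl fun i _ => ?_
      rw [ContinuousLinearMap.map_smul, smul_eq_mul]
      by_cases h0 : f (x i) = 0
      · have : t i = 0 := by simp [ht, h0]
        simp [h0, this, Real.zero_rpow hp0.ne']
      · have htpos : 0 < t i := by
          rw [ht]; exact norm_pos_iff.2 h0
        rw [ha, hs]
        have hconj : (starRingEnd 𝕜) (f (x i)) * f (x i) = ((‖f (x i)‖ : ℝ) : 𝕜) ^ 2 :=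
          RCLike.conj_mul _
        have hne : ((‖f (x i)‖ : ℝ) : 𝕜) ≠ 0 := by
          simp only [ne_eq, RCLike.ofReal_eq_zero, norm_eq_zero]
          exact h0
        have : ((t i ^ (p - 1) : ℝ) : 𝕜) * ((starRingEnd 𝕜) (f (x i)) / ((‖f (x i)‖:ℝ) : 𝕜))
            * f (x i) = ((t i ^ (p - 1) : ℝ) : 𝕜) * ((‖f (x i)‖:ℝ) : 𝕜) := by
          field_simp
          rw [mul_assoc, hconj, sq]
        rw [this, ← RCLike.ofReal_mul]
        congr 1
        show t i ^ (p - 1) * t i = t i ^ p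
        rw [← Real.rpow_add_one (ne_of_gt htpos) (p - 1), sub_add_cancel]
    have hnormfy : ∑ i, t i ^ p = ‖f y‖ := by
      rw [hfy, RCLike.norm_ofReal, abs_of_nonneg hT0]
    -- bound ‖g y‖ for g ∈ K
    have hgy : ∀ g ∈ K, ‖g y‖ ≤ (∑ i, t i ^ p) ^ (1 - 1/p) * sSup B := by
      intro g hg
      have h1 : ‖g y‖ ≤ ∑ i, ‖a i‖ * ‖g (x i)‖ := by
        rw [hy, map_sum]
        refine le_trans (norm_sum_le _ _) (Finset.sum_le_sum fun i _ => ?_)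
        rw [ContinuousLinearMap.map_smul, smul_eq_mul, norm_mul]
      have h2 : ∑ i, ‖a i‖ * ‖g (x i)‖
          ≤ ∑ i, (if t i = 0 then 0 else t i ^ (p - 1)) * ‖g (x i)‖ :=
        Finset.sum_le_sum fun i _ =>
          mul_le_mul_of_nonneg_right (hanorm i) (norm_nonneg _)
      have h3 := key_holder p hp t (fun i => ‖g (x i)‖) htnn (fun i => norm_nonneg _)
      have h4 : (∑ i, ‖g (x i)‖ ^ p) ^ (1/p) ≤ sSup B := hSB g hg
      calc ‖g y‖ ≤ ∑ i, (if t i = 0 then 0 else t i ^ (p - 1)) * ‖g (x i)‖ :=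
            le_trans h1 h2
        _ ≤ (∑ i, t i ^ p) ^ (1 - 1/p) * (∑ i, ‖g (x i)‖ ^ p) ^ (1/p) := h3
        _ ≤ (∑ i, t i ^ p) ^ (1 - 1/p) * sSup B :=
            mul_le_mul_of_nonneg_left h4 (Real.rpow_nonneg hT0 _)
    have hynorm : ‖y‖ ≤ (∑ i, t i ^ p) ^ (1 - 1/p) * sSup B := by
      rw [hKnorming y]
      refine Real.sSup_le ?_ (mul_nonneg (Real.rpow_nonneg hT0 _) hSB0)
      rintro r ⟨g, hg, rfl⟩
      exact hgy g hg
    have hmain : ∑ i, t i ^ p ≤ (∑ i, t i ^ p) ^ (1 - 1/p) * sSup B := by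
      calc ∑ i, t i ^ p = ‖f y‖ := hnormfy
        _ ≤ ‖f‖ * ‖y‖ := f.le_opNorm y
        _ ≤ 1 * ‖y‖ := by gcongr
        _ = ‖y‖ := one_mul _
        _ ≤ (∑ i, t i ^ p) ^ (1 - 1/p) * sSup B := hynorm
    -- conclude
    have hsplit : ∑ i, t i ^ p
        = (∑ i, t i ^ p) ^ (1 - 1/p) * (∑ i, t i ^ p) ^ (1/p) := by
      rw [← Real.rpow_add hTpos]
      norm_num
    have h5 : (∑ i, t i ^ p) ^ (1 - 1/p) * (∑ i, t i ^ p) ^ (1/p)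
        ≤ (∑ i, t i ^ p) ^ (1 - 1/p) * sSup B := by
      rw [← hsplit]; exact hmain
    exact le_of_mul_le_mul_left h5 (Real.rpow_pos_of_pos hTpos _)
  · -- easy direction
    refine Real.sSup_le ?_ ?_
    · rintro r ⟨f, hfK, rfl⟩
      exact le_csSup hAbdd ⟨f, hKball f hfK, rfl⟩
    · have h0A : (0:ℝ) ∈ A := by
        refine ⟨0, by simp, ?_⟩
        simp only [ContinuousLinearMap.zero_apply, norm_zero,
          Real.zero_rpow hp0.ne', Finset.sum_const_zero]
        rw [Real.zero_rpow (one_div_ne_zero hp0.ne')]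
    -- 0 ≤ sSup A
      exact le_csSup hAbdd h0A
end

section
/- Let K be a nonempty compact Hausdorff topological space and let n ≥ 1 be such that the iterated derived sets satisfy K^i ≠ ∅ for 0 ≤ i < n and K^n = ∅. For f ∈ C(K) (continuous scalar-valued functions, scalars ℝ or ℂ) define |f| = max_{0 ≤ i < n} 2^i · sup_{ϖ ∈ K^i} |f(ϖ)|. Then for every 0 ≤ i < n, every ε > 0 and every f ∈ C(K), the set { ϖ ∈ K^i : 2^i |f(ϖ)| ≥ ε + |f|/2 } is finite. -/
/-- The Grasberg norm `|f| = max_{0 ≤ i < n} 2^i sup_{ϖ ∈ K^(i)} |f ϖ|` on `C(K)`, where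
`K^(i)` denotes the `i`-th iterated derived set of `K`. -/
noncomputable def grasbergNorm {K : Type} [TopologicalSpace K] {𝕜 : Type} [RCLike 𝕜]
    (n : ℕ) (f : C(K, 𝕜)) : ℝ :=
  ⨆ i : Fin n, 2 ^ (i : ℕ) * ⨆ ϖ : (derivedSet^[(i : ℕ)] (Set.univ : Set K)), ‖f ϖ‖

lemma grasberg_le {K : Type} [TopologicalSpace K] [CompactSpace K] {𝕜 : Type} [RCLike 𝕜]
    (n : ℕ) (f : C(K, 𝕜)) {j : ℕ} (hj : j < n) {x : K}
    (hx : x ∈ derivedSet^[j] (Set.univ : Set K)) :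
    2 ^ j * ‖f x‖ ≤ grasbergNorm n f := by
  have hbdd : ∀ i : ℕ, BddAbove (Set.range fun ϖ : (derivedSet^[i] (Set.univ : Set K)) => ‖f ϖ‖) := by
    intro i
    refine ⟨‖f‖, ?_⟩
    rintro r ⟨ϖ, rfl⟩
    exact f.norm_coe_le_norm _
  have h1 : ‖f x‖ ≤ ⨆ ϖ : (derivedSet^[j] (Set.univ : Set K)), ‖f ϖ‖ :=
    le_ciSup (hbdd j) ⟨x, hx⟩
  have h2 : (2:ℝ) ^ j * ‖f x‖ ≤ 2 ^ j * ⨆ ϖ : (derivedSet^[j] (Set.univ : Set K)), ‖f ϖ‖ := by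
    gcongr
  refine h2.trans ?_
  exact le_ciSup (f := fun i : Fin n => 2 ^ (i : ℕ) * ⨆ ϖ : (derivedSet^[(i : ℕ)] (Set.univ : Set K)), ‖f ϖ‖)
    (Set.Finite.bddAbove (Set.finite_range _)) ⟨j, hj⟩

/-- If `K` is a nonempty compact Hausdorff space whose iterated derived sets satisfy
`K^(i) ≠ ∅` for `i < n` and `K^(n) = ∅`, then for every `i < n`, `ε > 0` and `f ∈ C(K)`,
the set `{ϖ ∈ K^(i) : 2^i |f ϖ| ≥ ε + |f|/2}` is finite, where `|·|` is the Grasberg norm. -/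
theorem stmt_8 {K : Type} [TopologicalSpace K] [CompactSpace K] [T2Space K] [Nonempty K]
    {𝕜 : Type} [RCLike 𝕜]
    (n : ℕ) (hn : 1 ≤ n)
    (hne : ∀ i < n, (derivedSet^[i] (Set.univ : Set K)).Nonempty)
    (hempty : derivedSet^[n] (Set.univ : Set K) = ∅) :
    ∀ i < n, ∀ ε : ℝ, 0 < ε → ∀ f : C(K, 𝕜),
      {ϖ : K | ϖ ∈ derivedSet^[i] (Set.univ : Set K) ∧
        ε + grasbergNorm n f / 2 ≤ 2 ^ i * ‖f ϖ‖}.Finite := by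
  intro i hi ε hε f
  by_contra hinf
  have hinf' : Set.Infinite _ := hinf
  set S := {ϖ : K | ϖ ∈ derivedSet^[i] (Set.univ : Set K) ∧
        ε + grasbergNorm n f / 2 ≤ 2 ^ i * ‖f ϖ‖} with hS
  obtain ⟨x, hx⟩ := hinf'.exists_accPt_principal
  have hxd : x ∈ derivedSet S := hx
  have hx1 : x ∈ derivedSet^[i+1] (Set.univ : Set K) := by
    rw [Function.iterate_succ_apply']
    exact derivedSet_mono _ _ (fun y hy => hy.1) hxd
  -- x ∈ closure S, and the defining condition is closed
  have hxc : x ∈ closure S := derivedSet_subset_closure S hxd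
  have hclosed : IsClosed {ϖ : K | ε + grasbergNorm n f / 2 ≤ 2 ^ i * ‖f ϖ‖} :=
    isClosed_le continuous_const (continuous_const.mul (f.continuous.norm))
  have hxle : ε + grasbergNorm n f / 2 ≤ 2 ^ i * ‖f x‖ :=
    hclosed.closure_subset (closure_mono (fun y hy => hy.2) hxc)
  have hi1 : i + 1 < n ∨ i + 1 = n := Nat.lt_or_ge (i+1) n |>.imp id (fun h => le_antisymm hi h)
  rcases hi1 with h | h
  · have := grasberg_le n f h hx1
    have h2 : (2:ℝ) ^ (i+1) * ‖f x‖ = 2 * (2 ^ i * ‖f x‖) := by ring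
    rw [h2] at this
    nlinarith [hxle]
  · rw [h, hempty] at hx1
    exact hx1
end

section
/- Let K be a nonempty compact Hausdorff topological space and let n ≥ 1 be such that the iterated derived sets satisfy K^i ≠ ∅ for 0 ≤ i < n and K^n = ∅. For f ∈ C(K) (scalars ℝ or ℂ) define the Grasberg norm |f| = max_{0 ≤ i < n} 2^i · sup_{ϖ ∈ K^i} |f(ϖ)|. Then: (1) ‖f‖_∞ ≤ |f| ≤ 2^{n-1} ‖f‖_∞ for every f ∈ C(K); and (2) for every f ∈ C(K) with |f| ≤ 1 and every ε > 0, the set L = ⋃_{0 ≤ i < n} { ϖ ∈ K^i : 2^i |f(ϖ)| ≥ ε + 1/2 } is finite, and every g ∈ C(K) with g(ϖ) = 0 for all ϖ ∈ L and |g| ≤ 1 satisfies |f + (1/2)g| ≤ 1 + ε. -/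
section Aux

variable {K : Type} [TopologicalSpace K] [CompactSpace K] [T2Space K]
  {𝕜 : Type} [RCLike 𝕜]

lemma aux_D_closed (i : ℕ) : IsClosed (derivedSet^[i] (Set.univ : Set K)) := by
  cases i with
  | zero => simp
  | succ i => rw [Function.iterate_succ_apply']; exact isClosed_derivedSet _

lemma aux_inner_bdd (f : C(K, 𝕜)) (i : ℕ) :
    BddAbove (Set.range fun ϖ : (derivedSet^[i] (Set.univ : Set K)) => ‖f ϖ‖) := by
  refine ⟨‖f‖, ?_⟩
  rintro _ ⟨ϖ, rfl⟩
  exact f.norm_coe_le_norm ϖ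

lemma aux_outer_bdd (n : ℕ) (f : C(K, 𝕜)) :
    BddAbove (Set.range fun i : Fin n =>
      (2 : ℝ) ^ (i : ℕ) * ⨆ ϖ : (derivedSet^[(i : ℕ)] (Set.univ : Set K)), ‖f ϖ‖) := by
  refine ⟨2 ^ n * ‖f‖, ?_⟩
  rintro _ ⟨i, rfl⟩
  have hS : (⨆ ϖ : (derivedSet^[(i : ℕ)] (Set.univ : Set K)), ‖f ϖ‖) ≤ ‖f‖ :=
    Real.iSup_le (fun ϖ => f.norm_coe_le_norm ϖ) (norm_nonneg f)
  have hS0 : 0 ≤ ⨆ ϖ : (derivedSet^[(i : ℕ)] (Set.univ : Set K)), ‖f ϖ‖ :=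
    Real.iSup_nonneg fun ϖ => norm_nonneg _
  exact mul_le_mul (by gcongr <;> [norm_num; exact i.2.le]) hS hS0 (by positivity)

lemma aux_pointwise (n : ℕ) (f : C(K, 𝕜)) {i : ℕ} (hi : i < n) {ϖ : K}
    (hϖ : ϖ ∈ derivedSet^[i] (Set.univ : Set K)) :
    (2 : ℝ) ^ i * ‖f ϖ‖ ≤ grasbergNorm n f := by
  have h1 : ‖f ϖ‖ ≤ ⨆ ϖ : (derivedSet^[i] (Set.univ : Set K)), ‖f ϖ‖ :=
    le_ciSup (aux_inner_bdd f i) ⟨ϖ, hϖ⟩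
  have h2 : (2 : ℝ) ^ i * ‖f ϖ‖ ≤
      (2 : ℝ) ^ i * ⨆ ϖ : (derivedSet^[i] (Set.univ : Set K)), ‖f ϖ‖ :=
    mul_le_mul_of_nonneg_left h1 (by positivity)
  exact h2.trans (le_ciSup (aux_outer_bdd n f) ⟨i, hi⟩)

lemma aux_norm_le (n : ℕ) (f : C(K, 𝕜)) {C : ℝ} (hC : 0 ≤ C)
    (h : ∀ i < n, ∀ ϖ ∈ derivedSet^[i] (Set.univ : Set K), (2 : ℝ) ^ i * ‖f ϖ‖ ≤ C) :
    grasbergNorm n f ≤ C := by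
  refine Real.iSup_le (fun i => ?_) hC
  rw [Real.mul_iSup_of_nonneg (by positivity : (0:ℝ) ≤ 2 ^ (i : ℕ))]
  exact Real.iSup_le (fun ϖ => h i i.2 ϖ ϖ.2) hC

lemma aux_nonneg (n : ℕ) (f : C(K, 𝕜)) : 0 ≤ grasbergNorm n f :=
  Real.iSup_nonneg fun i => mul_nonneg (by positivity)
    (Real.iSup_nonneg fun _ => norm_nonneg _)

end Aux

/-- If `K` is a nonempty compact Hausdorff space with `K^(i) ≠ ∅` for `i < n` and `K^(n) = ∅`,
then the Grasberg norm satisfies `‖f‖_∞ ≤ |f| ≤ 2^(n-1) ‖f‖_∞`, and it is asymptotically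
uniformly flat: for `|f| ≤ 1` and `ε > 0` the set
`L = ⋃_{i<n} {ϖ ∈ K^(i) : 2^i |f ϖ| ≥ ε + 1/2}` is finite and every `g` with `g|_L = 0` and
`|g| ≤ 1` satisfies `|f + g/2| ≤ 1 + ε`. -/
theorem stmt_9 {K : Type} [TopologicalSpace K] [CompactSpace K] [T2Space K] [Nonempty K]
    {𝕜 : Type} [RCLike 𝕜]
    (n : ℕ) (hn : 1 ≤ n)
    (hne : ∀ i < n, (derivedSet^[i] (Set.univ : Set K)).Nonempty)
    (hempty : derivedSet^[n] (Set.univ : Set K) = ∅) :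
    (∀ f : C(K, 𝕜), ‖f‖ ≤ grasbergNorm n f ∧ grasbergNorm n f ≤ 2 ^ (n - 1) * ‖f‖) ∧
    (∀ f : C(K, 𝕜), grasbergNorm n f ≤ 1 → ∀ ε : ℝ, 0 < ε →
      (⋃ i ∈ Finset.range n, {ϖ : K | ϖ ∈ derivedSet^[i] (Set.univ : Set K) ∧
          ε + 1 / 2 ≤ 2 ^ i * ‖f ϖ‖}).Finite ∧
      ∀ g : C(K, 𝕜),
        (∀ ϖ ∈ (⋃ i ∈ Finset.range n, {ϖ : K | ϖ ∈ derivedSet^[i] (Set.univ : Set K) ∧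
          ε + 1 / 2 ≤ 2 ^ i * ‖f ϖ‖}), g ϖ = 0) →
        grasbergNorm n g ≤ 1 →
        grasbergNorm n (f + (2⁻¹ : 𝕜) • g) ≤ 1 + ε) := by
  constructor
  · intro f
    constructor
    · refine (f.norm_le (aux_nonneg n f)).2 fun x => ?_
      have := aux_pointwise n f hn (ϖ := x) (by simp)
      simpa using this
    · refine aux_norm_le n f (by positivity) fun i hi ϖ hϖ => ?_
      have h1 : (2 : ℝ) ^ i ≤ 2 ^ (n - 1) := by
        gcongr
        · norm_num
        · omega
      exact mul_le_mul h1 (f.norm_coe_le_norm ϖ) (norm_nonneg _) (by positivity)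
  · intro f hf1 ε hε
    constructor
    · refine Set.Finite.biUnion (Finset.range n).finite_toSet fun i hi => ?_
      set L : Set K := {ϖ : K | ϖ ∈ derivedSet^[i] (Set.univ : Set K) ∧
          ε + 1 / 2 ≤ 2 ^ i * ‖f ϖ‖} with hL
      have hLclosed : IsClosed L := by
        have : L = derivedSet^[i] (Set.univ : Set K) ∩
            {ϖ : K | ε + 1 / 2 ≤ 2 ^ i * ‖f ϖ‖} := rfl
        rw [this]
        exact (aux_D_closed i).inter
          (isClosed_le continuous_const (continuous_const.mul f.continuous.norm))
      by_contra hinf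
      rw [← Set.not_infinite, not_not] at hinf
      obtain ⟨x, hx⟩ := hinf.exists_accPt_principal
      have hxd : x ∈ derivedSet L := hx
      have hxL : x ∈ L := hLclosed.closure_subset (derivedSet_subset_closure _ hxd)
      have hxD : x ∈ derivedSet^[i + 1] (Set.univ : Set K) := by
        rw [Function.iterate_succ_apply']
        exact derivedSet_mono _ _ (fun y hy => hy.1) hxd
      rcases eq_or_lt_of_le (Nat.succ_le_of_lt (Finset.mem_range.1 hi)) with heq | hlt
      · rw [Nat.succ_eq_add_one] at heq
        rw [heq, hempty] at hxD
        exact hxD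
      · have hb := (aux_pointwise n f hlt hxD).trans hf1
        have he : (2 : ℝ) ^ (i + 1) * ‖f x‖ = 2 * (2 ^ i * ‖f x‖) := by ring
        rw [he] at hb
        have := hxL.2
        linarith
    · intro g hg hg1
      refine aux_norm_le n _ (by linarith) fun i hi ϖ hϖ => ?_
      have heval : (f + (2⁻¹ : 𝕜) • g) ϖ = f ϖ + (2⁻¹ : 𝕜) * g ϖ := by
        simp [smul_eq_mul]
      by_cases hc : ε + 1 / 2 ≤ 2 ^ i * ‖f ϖ‖
      · have hg0 : g ϖ = 0 := hg ϖ (Set.mem_iUnion₂.2 ⟨i, Finset.mem_range.2 hi, hϖ, hc⟩)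
        have hfb := (aux_pointwise n f hi hϖ).trans hf1
        rw [heval, hg0, mul_zero, add_zero]
        linarith
      · push_neg at hc
        have hgb := (aux_pointwise n g hi hϖ).trans hg1
        have hnorm : ‖(f + (2⁻¹ : 𝕜) • g) ϖ‖ ≤ ‖f ϖ‖ + 2⁻¹ * ‖g ϖ‖ := by
          rw [heval]
          refine (norm_add_le _ _).trans ?_
          rw [norm_mul]
          gcongr
          simp
        have hp : (0 : ℝ) < 2 ^ i := by positivity
        have h1 : (2 : ℝ) ^ i * ‖(f + (2⁻¹ : 𝕜) • g) ϖ‖ ≤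
            2 ^ i * (‖f ϖ‖ + 2⁻¹ * ‖g ϖ‖) := mul_le_mul_of_nonneg_left hnorm hp.le
        have h2 : (2 : ℝ) ^ i * (‖f ϖ‖ + 2⁻¹ * ‖g ϖ‖) =
            2 ^ i * ‖f ϖ‖ + 2⁻¹ * (2 ^ i * ‖g ϖ‖) := by ring
        linarith
end

section
/- Let K be a compact Hausdorff topological space and let L ⊆ K be a finite set. Then there exists a continuous linear projection P : C(K) → C(K) (scalars ℝ or ℂ) with ‖P‖ ≤ 2 whose range is the subspace { f ∈ C(K) : f(ϖ) = 0 for all ϖ ∈ L }. -/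
/-- If `K` is compact Hausdorff and `L ⊆ K` is finite, then there is a continuous linear
projection `P` on `C(K)` with `‖P‖ ≤ 2` whose range is `{f : f|_L = 0}`. -/
theorem stmt_10 {K : Type} [TopologicalSpace K] [CompactSpace K] [T2Space K]
    {𝕜 : Type} [RCLike 𝕜] (L : Finset K) :
    ∃ P : C(K, 𝕜) →L[𝕜] C(K, 𝕜), ‖P‖ ≤ 2 ∧ P.comp P = P ∧
      Set.range P = {f : C(K, 𝕜) | ∀ ϖ ∈ L, f ϖ = 0} := by
  classical
  obtain ⟨U, hU, hUd⟩ := (L : Set K).toFinite.t2_separation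
  have he : ∀ x : K, ∃ e : C(K, ℝ), Set.EqOn e 0 (U x)ᶜ ∧ e x = 1 ∧
      ∀ t, e t ∈ Set.Icc (0 : ℝ) 1 := by
    intro x
    obtain ⟨e, h1, h2, h3⟩ := exists_continuous_zero_one_of_isClosed
      (hU x).2.isClosed_compl isClosed_singleton
      (Set.disjoint_singleton_right.mpr (by simpa using (hU x).1))
    exact ⟨e, h1, by simpa using h2 (Set.mem_singleton x), h3⟩
  choose e he0 he1 heI using he
  -- the `𝕜`-valued versions of the bump functions
  set e' : K → C(K, 𝕜) := fun x =>
    ⟨fun t => ((e x t : ℝ) : 𝕜), RCLike.continuous_ofReal.comp (e x).continuous⟩ with he'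
  set Q : C(K, 𝕜) →L[𝕜] C(K, 𝕜) :=
    ∑ x ∈ L, (ContinuousMap.evalCLM 𝕜 x).smulRight (e' x) with hQ
  have hQapp : ∀ (f : C(K, 𝕜)) (t : K),
      Q f t = ∑ x ∈ L, f x * ((e x t : ℝ) : 𝕜) := by
    intro f t
    simp [hQ, ContinuousLinearMap.sum_apply, he', smul_eq_mul, ContinuousMap.evalCLM]
  -- on `L`, `Q f` agrees with `f`
  have hA : ∀ (f : C(K, 𝕜)), ∀ x₀ ∈ L, Q f x₀ = f x₀ := by
    intro f x₀ hx₀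
    rw [hQapp]
    rw [Finset.sum_eq_single_of_mem x₀ hx₀ ?_]
    · simp [he1 x₀]
    · intro x hx hne
      have hdis : Disjoint (U x) (U x₀) := hUd hx hx₀ hne
      have : x₀ ∈ (U x)ᶜ := fun hmem => hdis.ne_of_mem hmem (hU x₀).1 rfl
      have := he0 x this
      simp only [Pi.zero_apply] at this
      simp [this]
  have hB : ∀ f : C(K, 𝕜), (∀ x ∈ L, f x = 0) → Q f = 0 := by
    intro f hf
    ext t
    rw [hQapp]
    simp only [ContinuousMap.zero_apply]
    exact Finset.sum_eq_zero fun x hx => by simp [hf x hx]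
  -- the sum of the bump functions is at most 1 pointwise
  have hC : ∀ t : K, ∑ x ∈ L, e x t ≤ 1 := by
    intro t
    by_cases h : ∃ x₀ ∈ L, t ∈ U x₀
    · obtain ⟨x₀, hx₀, ht⟩ := h
      rw [Finset.sum_eq_single_of_mem x₀ hx₀ ?_]
      · exact (heI x₀ t).2
      · intro x hx hne
        have hdis : Disjoint (U x) (U x₀) := hUd hx hx₀ hne
        have : t ∈ (U x)ᶜ := fun hmem => hdis.ne_of_mem hmem ht rfl
        simpa using he0 x this
    · push_neg at h
      rw [Finset.sum_eq_zero fun x hx => by simpa using he0 x (h x hx)]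
      norm_num
  set P : C(K, 𝕜) →L[𝕜] C(K, 𝕜) := ContinuousLinearMap.id 𝕜 _ - Q with hP
  have hPapp : ∀ (f : C(K, 𝕜)) (t : K), P f t = f t - Q f t := by
    intro f t; simp [hP]
  have hPzero : ∀ (f : C(K, 𝕜)), ∀ x ∈ L, P f x = 0 := by
    intro f x hx
    rw [hPapp, hA f x hx, sub_self]
  have hPfix : ∀ f : C(K, 𝕜), (∀ x ∈ L, f x = 0) → P f = f := by
    intro f hf
    have := hB f hf
    ext t
    rw [hPapp, this]
    simp
  refine ⟨P, ?_, ?_, ?_⟩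
  · apply ContinuousLinearMap.opNorm_le_bound _ (by norm_num)
    intro f
    apply ContinuousMap.norm_le _ (by positivity) |>.mpr
    intro t
    rw [hPapp f t, hQapp f t]
    calc ‖f t - ∑ x ∈ L, f x * ((e x t : ℝ) : 𝕜)‖
        ≤ ‖f t‖ + ‖∑ x ∈ L, f x * ((e x t : ℝ) : 𝕜)‖ := norm_sub_le _ _
      _ ≤ ‖f‖ + ∑ x ∈ L, ‖f x * ((e x t : ℝ) : 𝕜)‖ := by
          gcongr
          · exact f.norm_coe_le_norm t
          · exact norm_sum_le _ _
      _ ≤ ‖f‖ + ∑ x ∈ L, ‖f‖ * e x t := by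
          gcongr with x hx
          rw [norm_mul]
          have h1 : ‖f x‖ ≤ ‖f‖ := f.norm_coe_le_norm x
          have h2 : ‖((e x t : ℝ) : 𝕜)‖ = e x t := by
            rw [RCLike.norm_ofReal, abs_of_nonneg (heI x t).1]
          rw [h2]
          exact mul_le_mul_of_nonneg_right h1 (heI x t).1
      _ = ‖f‖ + ‖f‖ * ∑ x ∈ L, e x t := by rw [Finset.mul_sum]
      _ ≤ ‖f‖ + ‖f‖ * 1 := by
          have := hC t
          have h0 : (0:ℝ) ≤ ‖f‖ := norm_nonneg f
          nlinarith
      _ = 2 * ‖f‖ := by ring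
  · ext f
    exact congrFun (congrArg _ (hPfix (P f) (hPzero f))) _
  · ext f
    constructor
    · rintro ⟨g, rfl⟩
      exact hPzero g
    · intro hf
      exact ⟨f, hPfix f hf⟩
end

section
/- Let X be a Banach space over ℝ or ℂ that has the tail approximation property with constant β ≥ 1. Then for every finite-dimensional subspace E of the dual X* there exist a finite-dimensional subspace F of X* with E ⊆ F and a continuous linear projection Q : X* → X* with range F and ‖Q‖ ≤ β. (That is, X* is a Π_β space.) -/
open NormedSpace

/-- A Banach space `X` has the tail approximation property (TAP) with constant `β ≥ 1` if every
closed finite-codimensional subspace `W` of `X` contains a closed finite-codimensional subspace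
`Y` which is the range of a projection `P₁` with `‖P₁‖ ≤ β` whose complementary projection
`P₀ = I - P₁` also satisfies `‖P₀‖ ≤ β`. -/
def TailApproxProperty (𝕜 : Type) [RCLike 𝕜] (X : Type) [NormedAddCommGroup X]
    [NormedSpace 𝕜 X] (β : ℝ) : Prop :=
  ∀ W : Subspace 𝕜 X, IsClosed (W : Set X) → FiniteDimensional 𝕜 (X ⧸ W) →
    ∃ Y : Subspace 𝕜 X, IsClosed (Y : Set X) ∧ FiniteDimensional 𝕜 (X ⧸ Y) ∧ Y ≤ W ∧
      ∃ P₀ P₁ : X →L[𝕜] X, P₀.comp P₀ = P₀ ∧ P₁.comp P₁ = P₁ ∧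
        P₀ + P₁ = ContinuousLinearMap.id 𝕜 X ∧ ‖P₀‖ ≤ β ∧ ‖P₁‖ ≤ β ∧
        Set.range P₁ = (Y : Set X)

/-- If the Banach space `X` has TAP with constant `β`, then `X*` is a `Π_β` space: every
finite-dimensional subspace `E ⊆ X*` is contained in a finite-dimensional subspace `F ⊆ X*`
which is the range of a projection of norm at most `β`. -/
theorem stmt_11 {𝕜 : Type} [RCLike 𝕜] {X : Type}
    [NormedAddCommGroup X] [NormedSpace 𝕜 X] [CompleteSpace X]
    (β : ℝ) (hβ : 1 ≤ β) (hTAP : TailApproxProperty 𝕜 X β) :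
    ∀ E : Subspace 𝕜 (StrongDual 𝕜 X), FiniteDimensional 𝕜 E →
      ∃ F : Subspace 𝕜 (StrongDual 𝕜 X), FiniteDimensional 𝕜 F ∧ E ≤ F ∧
        ∃ Q : StrongDual 𝕜 X →L[𝕜] StrongDual 𝕜 X, Q.comp Q = Q ∧ ‖Q‖ ≤ β ∧
          Set.range Q = (F : Set (StrongDual 𝕜 X)) := by
  intro E hE
  -- evaluation map into the dual of E
  let ev : X →ₗ[𝕜] Module.Dual 𝕜 E :=
    { toFun := fun x =>
        { toFun := fun f => (f : StrongDual 𝕜 X) x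
          map_add' := by intro f g; rfl
          map_smul' := by intro c f; rfl }
      map_add' := by intro x y; ext f; simp
      map_smul' := by intro c x; ext f; simp }
  let W : Subspace 𝕜 X := LinearMap.ker ev
  have hWmem : ∀ x : X, x ∈ W ↔ ∀ f : E, (f : StrongDual 𝕜 X) x = 0 := by
    intro x
    constructor
    · intro hx f
      have := LinearMap.mem_ker.mp hx
      exact congrFun (congrArg (fun g => g.toFun) this) f
    · intro h
      exact LinearMap.mem_ker.mpr (by ext f; exact h f)
  have hWclosed : IsClosed (W : Set X) := by
    have : (W : Set X) = ⋂ f : E, ((f : StrongDual 𝕜 X) ⁻¹' {0}) := by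
      ext x
      simp only [Set.mem_iInter, Set.mem_preimage, Set.mem_singleton_iff, SetLike.mem_coe]
      exact hWmem x
    rw [this]
    exact isClosed_iInter fun f => (isClosed_singleton).preimage (f : StrongDual 𝕜 X).continuous
  have hWcodim : FiniteDimensional 𝕜 (X ⧸ W) := by
    haveI : FiniteDimensional 𝕜 (Module.Dual 𝕜 E) := @Module.dual_finite 𝕜 E _ _ _ _ (@Module.Projective.of_free 𝕜 _ E _ _ (Module.Free.of_divisionRing 𝕜 E))
    haveI : FiniteDimensional 𝕜 (LinearMap.range ev) := inferInstance
    exact Module.Finite.equiv (LinearMap.quotKerEquivRange ev).symm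
  obtain ⟨Y, hYclosed, hYcodim, hYW, P₀, P₁, hP₀idem, hP₁idem, hsum, hnP₀, hnP₁, hranP₁⟩ :=
    hTAP W hWclosed hWcodim
  -- the projection on the dual: f ↦ f ∘ P₀
  let Q : StrongDual 𝕜 X →L[𝕜] StrongDual 𝕜 X := (ContinuousLinearMap.compL 𝕜 X X 𝕜).flip P₀
  have hQapp : ∀ f : StrongDual 𝕜 X, Q f = f.comp P₀ := fun f => rfl
  have hP₀x : ∀ x : X, P₀ x = x - P₁ x := by
    intro x
    have := congrFun (congrArg (fun (T : X →L[𝕜] X) => (T : X → X)) hsum) x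
    simp only [ContinuousLinearMap.add_apply, ContinuousLinearMap.coe_id', id_eq] at this
    exact eq_sub_of_add_eq this
  -- f in range Q vanishes on Y
  have hP₁fix : ∀ y ∈ Y, P₁ y = y := by
    intro y hy
    have : y ∈ Set.range P₁ := hranP₁ ▸ hy
    obtain ⟨z, rfl⟩ := this
    have := congrFun (congrArg (fun (T : X →L[𝕜] X) => (T : X → X)) hP₁idem) z
    simpa using this
  have hP₀Y : ∀ y ∈ Y, P₀ y = 0 := by
    intro y hy
    rw [hP₀x, hP₁fix y hy, sub_self]
  have hvanish : ∀ f ∈ LinearMap.range Q.toLinearMap, ∀ y ∈ Y, f y = 0 := by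
    rintro f ⟨g, rfl⟩ y hy
    show g (P₀ y) = 0
    rw [hP₀Y y hy, map_zero]
  let F : Subspace 𝕜 (StrongDual 𝕜 X) := LinearMap.range Q.toLinearMap
  refine ⟨F, ?_, ?_, Q, ?_, ?_, ?_⟩
  · -- finite-dimensionality of F via injection into Dual (X ⧸ Y)
    let Φ : F →ₗ[𝕜] Module.Dual 𝕜 (X ⧸ Y) :=
      { toFun := fun f => Y.liftQ (f : StrongDual 𝕜 X).toLinearMap (fun y hy => hvanish f.1 f.2 y hy)
        map_add' := by
          intro f g
          apply Submodule.linearMap_qext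
          ext x
          rfl
        map_smul' := by
          intro c f
          apply Submodule.linearMap_qext
          ext x
          rfl }
    have hΦinj : Function.Injective Φ := by
      intro f g h
      apply Subtype.ext
      apply ContinuousLinearMap.coe_injective
      have h1 := congrArg (fun T : (X ⧸ Y) →ₗ[𝕜] 𝕜 => T.comp Y.mkQ) h
      exact LinearMap.ext fun x => congrArg (fun T : (X ⧸ Y) →ₗ[𝕜] 𝕜 => T (Submodule.Quotient.mk x)) h
    exact FiniteDimensional.of_injective Φ hΦinj
  · -- E ≤ F
    intro g hg
    refine ⟨g, ?_⟩
    ext x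
    show g (P₀ x) = g x
    rw [hP₀x]
    have : P₁ x ∈ Y := by rw [← SetLike.mem_coe, ← hranP₁]; exact Set.mem_range_self x
    have hy : g (P₁ x) = 0 := (hWmem (P₁ x)).mp (hYW this) ⟨g, hg⟩
    rw [map_sub, hy, sub_zero]
  · -- idempotence
    ext f x
    show ((f.comp P₀).comp P₀) x = (f.comp P₀) x
    rw [ContinuousLinearMap.comp_assoc, hP₀idem]
  · -- norm bound
    refine ContinuousLinearMap.opNorm_le_bound Q (le_trans zero_le_one hβ) fun f => ?_
    rw [hQapp]
    calc ‖f.comp P₀‖ ≤ ‖f‖ * ‖P₀‖ := ContinuousLinearMap.opNorm_comp_le f P₀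
      _ ≤ ‖f‖ * β := by exact mul_le_mul_of_nonneg_left hnP₀ (norm_nonneg f)
      _ = β * ‖f‖ := mul_comm _ _
  · exact (LinearMap.coe_range Q.toLinearMap).symm
end

section
/- Let X be a Banach space over ℝ or ℂ. Suppose there exist β₀ ≥ 1 and a set F ⊆ X* whose linear span is dense in X*, such that for every finite subset F₀ ⊆ F there exists a finite set F' with F₀ ⊆ F' ⊆ F and a continuous linear projection of X onto ⋂_{ψ ∈ F'} ker(ψ) of norm at most β₀. Then for every β > 1 + β₀, X has the tail approximation property with constant β. -/
open NormedSpace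

set_option maxHeartbeats 1000000 in
/-- If there are `β₀ ≥ 1` and a set `F ⊆ X*` with dense span such that for every finite
`F₀ ⊆ F` there is a finite `F'` with `F₀ ⊆ F' ⊆ F` for which the common kernel
`⋂_{ψ ∈ F'} ker ψ` is the range of a projection of norm at most `β₀`, then `X` has the tail
approximation property with any constant `β > 1 + β₀`. -/
theorem stmt_12 {𝕜 : Type} [RCLike 𝕜] {X : Type}
    [NormedAddCommGroup X] [NormedSpace 𝕜 X] [CompleteSpace X]
    (β₀ : ℝ) (hβ₀ : 1 ≤ β₀) (F : Set (StrongDual 𝕜 X))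
    (hdense : Dense ((Submodule.span 𝕜 F : Subspace 𝕜 (StrongDual 𝕜 X)) : Set (StrongDual 𝕜 X)))
    (hproj : ∀ F₀ : Finset (StrongDual 𝕜 X), (F₀ : Set (StrongDual 𝕜 X)) ⊆ F →
      ∃ F' : Finset (StrongDual 𝕜 X), (F₀ : Set (StrongDual 𝕜 X)) ⊆ (F' : Set (StrongDual 𝕜 X)) ∧
        (F' : Set (StrongDual 𝕜 X)) ⊆ F ∧
        ∃ P : X →L[𝕜] X, P.comp P = P ∧ ‖P‖ ≤ β₀ ∧
          Set.range P = {x : X | ∀ ψ ∈ F', ψ x = 0}) :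
    ∀ β : ℝ, 1 + β₀ < β → TailApproxProperty 𝕜 X β := by
  classical
  intro β hβ W hWclosed hWfin
  have hβ₀pos : (0:ℝ) < β₀ := lt_of_lt_of_le one_pos hβ₀
  -- a continuous projection onto W
  obtain ⟨f, hf⟩ := Submodule.ClosedComplemented.of_quotient_finiteDimensional hWclosed
  set Q : X →L[𝕜] X := ContinuousLinearMap.id 𝕜 X - W.subtypeL.comp f with hQdef
  have hQapply : ∀ v : X, Q v = v - (f v : X) := fun v => rfl
  have hQW : ∀ w ∈ W, Q w = 0 := by
    intro w hw
    have : f w = ⟨w, hw⟩ := hf ⟨w, hw⟩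
    simp [hQapply, this]
  have hkerQ : ∀ v : X, Q v = 0 → v ∈ W := by
    intro v hv
    rw [hQapply, sub_eq_zero] at hv
    rw [hv]; exact (f v).2
  have hQQ : ∀ v : X, Q (Q v) = Q v := by
    intro v
    have h1 : f ((f v : X)) = f v := hf (f v)
    rw [hQapply, hQapply v, map_sub, h1]
    simp
  -- the range of Q is finite dimensional
  have hkerQlin : LinearMap.ker (Q : X →ₗ[𝕜] X) = W := by
    ext v
    constructor
    · exact fun h => hkerQ v h
    · exact fun h => hQW v h
  haveI hfd1 : FiniteDimensional 𝕜 (X ⧸ LinearMap.ker (Q : X →ₗ[𝕜] X)) := by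
    rw [hkerQlin]; exact hWfin
  set U : Submodule 𝕜 X := LinearMap.range (Q : X →ₗ[𝕜] X) with hUdef
  haveI hUfd : FiniteDimensional 𝕜 U :=
    (LinearMap.quotKerEquivRange (Q : X →ₗ[𝕜] X)).finiteDimensional
  set n : ℕ := Module.finrank 𝕜 U
  set b : Module.Basis (Fin n) 𝕜 U := Module.finBasis 𝕜 U with hbdef
  have hQmem : ∀ v : X, Q v ∈ U := fun v => LinearMap.mem_range_self _ v
  set Qr : X →L[𝕜] U := Q.codRestrict U hQmem with hQr
  set φ : Fin n → (StrongDual 𝕜 X) :=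
    fun i => (LinearMap.toContinuousLinearMap (b.coord i)).comp Qr with hφdef
  set c : Fin n → X := fun i => (b i : X) with hcdef
  have hQsum : ∀ v : X, Q v = ∑ i, φ i v • c i := by
    intro v
    have h2 : ((∑ i, b.repr (Qr v) i • b i : U) : X) = ((Qr v : U) : X) := by
      rw [b.sum_repr (Qr v)]
    rw [show Q v = ((Qr v : U) : X) from rfl, ← h2]
    push_cast
    simp only [hφdef, hcdef, ContinuousLinearMap.comp_apply,
      LinearMap.coe_toContinuousLinearMap', Module.Basis.coord_apply]
  -- numeric setup
  set r : ℝ := β - 1 with hrdef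
  have hr : β₀ < r := by simp only [hrdef]; linarith
  have hrpos : 0 < r := lt_trans hβ₀pos hr
  set δ : ℝ := min (1/2) ((r - β₀)/(r + β₀)) with hδdef
  have hδpos : 0 < δ := by
    apply lt_min (by norm_num)
    exact div_pos (by linarith) (by linarith)
  have hδhalf : δ ≤ 1/2 := min_le_left _ _
  have hδlt1 : δ < 1 := lt_of_le_of_lt hδhalf (by norm_num)
  have hδkey : β₀ * (1 + δ) ≤ r * (1 - δ) := by
    have h1 : δ ≤ (r - β₀)/(r + β₀) := min_le_right _ _
    have h2 : δ * (r + β₀) ≤ r - β₀ :=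
      (le_div_iff₀ (by linarith : (0:ℝ) < r + β₀)).1 h1
    ring_nf
    ring_nf at h2
    linarith
  set C : ℝ := ∑ i, ‖c i‖ with hCdef
  have hC : 0 ≤ C := Finset.sum_nonneg fun i _ => norm_nonneg _
  set ε : ℝ := δ / (β₀ * (C + 1)) with hεdef
  have hεpos : 0 < ε := div_pos hδpos (by positivity)
  -- approximate the φ i by elements of the span of F
  have happrox : ∀ i : Fin n, ∃ g ∈ Submodule.span 𝕜 F, ‖φ i - g‖ < ε := by
    intro i
    have := Metric.mem_closure_iff.1 (hdense (φ i)) ε hεpos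
    obtain ⟨g, hg, hd⟩ := this
    exact ⟨g, hg, by rwa [← dist_eq_norm]⟩
  choose g hgspan hgnorm using happrox
  have hsup : ∀ i : Fin n, ∃ s : Finset (StrongDual 𝕜 X),
      (s : Set (StrongDual 𝕜 X)) ⊆ F ∧ g i ∈ Submodule.span 𝕜 (s : Set (StrongDual 𝕜 X)) :=
    fun i => Submodule.mem_span_finite_of_mem_span (hgspan i)
  choose s hsF hgs using hsup
  set F₀ : Finset (StrongDual 𝕜 X) := Finset.univ.biUnion s with hF₀def
  have hF₀F : (F₀ : Set (StrongDual 𝕜 X)) ⊆ F := by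
    intro ψ hψ
    simp only [hF₀def, Finset.coe_biUnion, Set.mem_iUnion, Finset.coe_univ,
      Set.mem_univ, Set.iUnion_true] at hψ
    obtain ⟨i, hi⟩ := hψ
    exact hsF i hi
  obtain ⟨F', hF₀F', hF'F, P, hPP, hPnorm, hPrange⟩ := hproj F₀ hF₀F
  -- basic facts about P and its range Z
  set Z : Submodule 𝕜 X := LinearMap.range (P : X →ₗ[𝕜] X) with hZdef
  have hZset : (Z : Set X) = {x : X | ∀ ψ ∈ F', ψ x = 0} := by
    rw [hZdef, LinearMap.coe_range]; exact hPrange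
  have hZP : ∀ z ∈ Z, P z = z := by
    intro z hz
    obtain ⟨w, rfl⟩ := hz
    have := congrArg (fun (T : X →L[𝕜] X) => T w) hPP
    simpa only [ContinuousLinearMap.mul_apply, ContinuousLinearMap.one_apply,
      ContinuousLinearMap.comp_apply, ContinuousLinearMap.coe_coe] using this
  have hgP : ∀ i : Fin n, ∀ v : X, (g i) (P v) = 0 := by
    intro i v
    have hPv : ∀ ψ ∈ F', ψ (P v) = 0 := by
      have : P v ∈ (Z : Set X) := ⟨v, rfl⟩
      rw [hZset] at this
      exact this
    have hle : Submodule.span 𝕜 (s i : Set (StrongDual 𝕜 X)) ≤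
        LinearMap.ker ((LinearMap.applyₗ (R := 𝕜) (P v)).comp
          (ContinuousLinearMap.coeLM 𝕜)) := by
      rw [Submodule.span_le]
      intro ψ hψ
      have hψF' : ψ ∈ F' := hF₀F' (by
        simp only [hF₀def, Finset.coe_biUnion, Set.mem_iUnion, Finset.coe_univ,
          Set.mem_univ, Set.iUnion_true]
        exact ⟨i, hψ⟩)
      simpa using hPv ψ hψF'
    have := hle (hgs i)
    simpa using this
  have hφP : ∀ i : Fin n, ∀ v : X, ‖(φ i) (P v)‖ ≤ ε * (β₀ * ‖v‖) := by
    intro i v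
    have h1 : (φ i) (P v) = (φ i - g i) (P v) := by
      simp [hgP i v]
    rw [h1]
    calc ‖(φ i - g i) (P v)‖ ≤ ‖φ i - g i‖ * ‖P v‖ := (φ i - g i).le_opNorm _
      _ ≤ ε * (β₀ * ‖v‖) := by
          apply mul_le_mul (le_of_lt (hgnorm i)) _ (norm_nonneg _) (le_of_lt hεpos)
          calc ‖P v‖ ≤ ‖P‖ * ‖v‖ := P.le_opNorm v
            _ ≤ β₀ * ‖v‖ := mul_le_mul_of_nonneg_right hPnorm (norm_nonneg v)
  have hQPnorm : ‖Q.comp P‖ ≤ δ := by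
    apply ContinuousLinearMap.opNorm_le_bound _ (le_of_lt hδpos)
    intro v
    have h1 : ‖Q (P v)‖ ≤ ε * β₀ * C * ‖v‖ := by
      rw [hQsum (P v)]
      calc ‖∑ i, (φ i) (P v) • c i‖ ≤ ∑ i, ‖(φ i) (P v) • c i‖ := norm_sum_le _ _
        _ ≤ ∑ i, (ε * (β₀ * ‖v‖)) * ‖c i‖ := by
            apply Finset.sum_le_sum
            intro i _
            rw [norm_smul]
            exact mul_le_mul_of_nonneg_right (hφP i v) (norm_nonneg _)
        _ = ε * β₀ * C * ‖v‖ := by rw [← Finset.mul_sum, ← hCdef]; ring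
    refine le_trans h1 ?_
    apply mul_le_mul_of_nonneg_right _ (norm_nonneg v)
    have : ε * β₀ * C = δ * (C / (C+1)) := by
      rw [hεdef]; field_simp
    rw [this]
    calc δ * (C / (C + 1)) ≤ δ * 1 := by
          apply mul_le_mul_of_nonneg_left _ (le_of_lt hδpos)
          rw [div_le_one (by linarith)]; linarith
      _ = δ := mul_one _
  -- the invertible perturbation
  set t : X →L[𝕜] X := Q * P with htdef
  have htnorm : ‖t‖ ≤ δ := by rw [htdef, ContinuousLinearMap.mul_def]; exact hQPnorm
  have htlt1 : ‖t‖ < 1 := lt_of_le_of_lt htnorm hδlt1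
  set u : (X →L[𝕜] X)ˣ := Units.oneSub t htlt1 with hudef
  have hu : (↑u : X →L[𝕜] X) = 1 - t := rfl
  have hone : (1 : X →L[𝕜] X) = ContinuousLinearMap.id 𝕜 X := ContinuousLinearMap.one_def
  have honele : ‖(1 : X →L[𝕜] X)‖ ≤ 1 := by
    rw [hone]; exact ContinuousLinearMap.norm_id_le
  have huval_norm : ‖(↑u : X →L[𝕜] X)‖ ≤ 1 + δ := by
    rw [hu]
    calc ‖(1 : X →L[𝕜] X) - t‖ ≤ ‖(1 : X →L[𝕜] X)‖ + ‖t‖ := norm_sub_le _ _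
      _ ≤ 1 + δ := add_le_add honele htnorm
  have hinv_eq : (↑u⁻¹ : X →L[𝕜] X) = 1 + ↑u⁻¹ * t := by
    have h := u.inv_mul
    rw [hu, mul_sub, mul_one] at h
    exact eq_add_of_sub_eq h
  have hinvnorm : ‖(↑u⁻¹ : X →L[𝕜] X)‖ * (1 - δ) ≤ 1 := by
    have h1 : ‖(↑u⁻¹ : X →L[𝕜] X)‖ ≤ 1 + ‖(↑u⁻¹ : X →L[𝕜] X)‖ * δ := by
      calc ‖(↑u⁻¹ : X →L[𝕜] X)‖ = ‖(1 : X →L[𝕜] X) + ↑u⁻¹ * t‖ := by rw [← hinv_eq]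
        _ ≤ ‖(1 : X →L[𝕜] X)‖ + ‖(↑u⁻¹ : X →L[𝕜] X) * t‖ := norm_add_le _ _
        _ ≤ 1 + ‖(↑u⁻¹ : X →L[𝕜] X)‖ * ‖t‖ := add_le_add honele (norm_mul_le _ _)
        _ ≤ 1 + ‖(↑u⁻¹ : X →L[𝕜] X)‖ * δ := by
            exact add_le_add_right (mul_le_mul_of_nonneg_left htnorm (norm_nonneg _)) 1
    nlinarith
  have huu : ∀ v : X, (↑u : X →L[𝕜] X) ((↑u⁻¹ : X →L[𝕜] X) v) = v := by
    intro v
    have := congrArg (fun T : X →L[𝕜] X => T v) u.mul_inv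
    simpa only [ContinuousLinearMap.mul_apply, ContinuousLinearMap.one_apply] using this
  have hu'u : ∀ v : X, (↑u⁻¹ : X →L[𝕜] X) ((↑u : X →L[𝕜] X) v) = v := by
    intro v
    have := congrArg (fun T : X →L[𝕜] X => T v) u.inv_mul
    simpa only [ContinuousLinearMap.mul_apply, ContinuousLinearMap.one_apply] using this
  -- the projections
  set P₁ : X →L[𝕜] X := ↑u * P * ↑u⁻¹ with hP₁def
  have hPPm : P * P = P := by rw [ContinuousLinearMap.mul_def]; exact hPP
  have hP₁mul : P₁ * P₁ = P₁ := by
    rw [hP₁def]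
    simp only [mul_assoc, Units.inv_mul_cancel_left]
    rw [← mul_assoc P P, hPPm]
  have hP₁comp : P₁.comp P₁ = P₁ := by rw [← ContinuousLinearMap.mul_def]; exact hP₁mul
  have hP₁apply : ∀ v : X, P₁ v = (↑u : X →L[𝕜] X) (P ((↑u⁻¹ : X →L[𝕜] X) v)) := by
    intro v; rw [hP₁def]; simp [ContinuousLinearMap.mul_apply]
  have hP₁norm : ‖P₁‖ ≤ r := by
    have e0 : ‖P₁‖ ≤ ‖(↑u : X →L[𝕜] X)‖ * ‖P‖ * ‖(↑u⁻¹ : X →L[𝕜] X)‖ := by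
      rw [hP₁def]
      calc ‖(↑u : X →L[𝕜] X) * P * ↑u⁻¹‖ ≤ ‖(↑u : X →L[𝕜] X) * P‖ * ‖(↑u⁻¹ : X →L[𝕜] X)‖ :=
            norm_mul_le _ _
        _ ≤ ‖(↑u : X →L[𝕜] X)‖ * ‖P‖ * ‖(↑u⁻¹ : X →L[𝕜] X)‖ :=
            mul_le_mul_of_nonneg_right (norm_mul_le _ _) (norm_nonneg _)
    have e1 : ‖(↑u : X →L[𝕜] X)‖ * ‖P‖ ≤ (1 + δ) * β₀ :=
      mul_le_mul huval_norm hPnorm (norm_nonneg _) (by linarith)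
    have e2 : ‖(↑u : X →L[𝕜] X)‖ * ‖P‖ * ‖(↑u⁻¹ : X →L[𝕜] X)‖
        ≤ (1 + δ) * β₀ * ‖(↑u⁻¹ : X →L[𝕜] X)‖ :=
      mul_le_mul_of_nonneg_right e1 (norm_nonneg _)
    have e3 : (1 + δ) * β₀ * ‖(↑u⁻¹ : X →L[𝕜] X)‖ ≤ r * (1 - δ) * ‖(↑u⁻¹ : X →L[𝕜] X)‖ :=
      mul_le_mul_of_nonneg_right (by linarith [hδkey]) (norm_nonneg _)
    have e4 : r * (1 - δ) * ‖(↑u⁻¹ : X →L[𝕜] X)‖ ≤ r * 1 := by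
      rw [mul_assoc]
      apply mul_le_mul_of_nonneg_left _ hrpos.le
      rw [mul_comm]
      exact hinvnorm
    linarith
  set P₀ : X →L[𝕜] X := ContinuousLinearMap.id 𝕜 X - P₁ with hP₀def
  have hP₀one : P₀ = 1 - P₁ := by rw [hP₀def, hone]
  have hP₀comp : P₀.comp P₀ = P₀ := by
    rw [← ContinuousLinearMap.mul_def, hP₀one, mul_sub, sub_mul, sub_mul, mul_one, one_mul,
      hP₁mul]
    abel
  have hsum : P₀ + P₁ = ContinuousLinearMap.id 𝕜 X := by rw [hP₀def]; abel
  have hP₀norm : ‖P₀‖ ≤ β := by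
    rw [hP₀one]
    calc ‖(1 : X →L[𝕜] X) - P₁‖ ≤ ‖(1 : X →L[𝕜] X)‖ + ‖P₁‖ := norm_sub_le _ _
      _ ≤ 1 + r := add_le_add honele hP₁norm
      _ = β := by rw [hrdef]; ring
  -- the subspace Y
  set Y : Submodule 𝕜 X := Z.map ((↑u : X →L[𝕜] X) : X →ₗ[𝕜] X) with hYdef
  have hYset : (Y : Set X) = (↑u : X →L[𝕜] X) '' (Z : Set X) := rfl
  have hZclosed : IsClosed (Z : Set X) := by
    rw [hZset]
    have : {x : X | ∀ ψ ∈ F', ψ x = 0} = ⋂ ψ ∈ F', (⇑ψ ⁻¹' ({0} : Set 𝕜)) := by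
      ext x; simp
    rw [this]
    exact isClosed_biInter fun ψ _ => isClosed_singleton.preimage ψ.continuous
  have hYpre : (Y : Set X) = (↑u⁻¹ : X →L[𝕜] X) ⁻¹' (Z : Set X) := by
    rw [hYset]
    ext x
    constructor
    · rintro ⟨z, hz, rfl⟩
      have : (↑u⁻¹ : X →L[𝕜] X) ((↑u : X →L[𝕜] X) z) = z := hu'u z
      simpa [Set.mem_preimage, this] using hz
    · intro hx
      exact ⟨_, hx, huu x⟩
  have hYclosed : IsClosed (Y : Set X) := by
    rw [hYpre]
    exact hZclosed.preimage (↑u⁻¹ : X →L[𝕜] X).continuous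
  -- finite codimension of Y
  set Φ : X →ₗ[𝕜] ({ψ // ψ ∈ F'} → 𝕜) :=
    LinearMap.pi (fun ψ => ((ψ.1 : StrongDual 𝕜 X) : X →ₗ[𝕜] 𝕜)) with hΦdef
  have hZmem : ∀ x : X, x ∈ Z ↔ ∀ ψ ∈ F', ψ x = 0 := by
    intro x
    rw [← SetLike.mem_coe, hZset]
    rfl
  have hkerΦ : LinearMap.ker Φ = Z := by
    ext x
    rw [LinearMap.mem_ker, hZmem x]
    constructor
    · intro h ψ hψ
      have := congrFun h ⟨ψ, hψ⟩
      simpa [hΦdef] using this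
    · intro h
      funext ψ
      simpa [hΦdef] using h ψ.1 ψ.2
  haveI hfdZ : FiniteDimensional 𝕜 (X ⧸ Z) := by
    rw [← hkerΦ]
    exact (LinearMap.quotKerEquivRange Φ).symm.finiteDimensional
  set e : X ≃ₗ[𝕜] X := LinearEquiv.ofLinear
    ((↑u : X →L[𝕜] X) : X →ₗ[𝕜] X) ((↑u⁻¹ : X →L[𝕜] X) : X →ₗ[𝕜] X)
    (by ext v; simp [huu v]) (by ext v; simp [hu'u v]) with hedef
  have hmape : Z.map (e : X →ₗ[𝕜] X) = Y := by
    ext x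
    simp only [Submodule.mem_map, hYdef, hedef, LinearEquiv.coe_coe, LinearEquiv.ofLinear_apply,
      ContinuousLinearMap.coe_coe]
  haveI hfdY : FiniteDimensional 𝕜 (X ⧸ Y) :=
    (Submodule.Quotient.equiv Z Y e hmape).finiteDimensional
  -- Y is contained in W
  have hYW : Y ≤ W := by
    rintro x hx
    obtain ⟨z, hz, rfl⟩ := hx
    have h1 : (↑u : X →L[𝕜] X) z = z - Q z := by
      rw [hu]
      simp [htdef, ContinuousLinearMap.sub_apply, ContinuousLinearMap.mul_apply,
        ContinuousLinearMap.one_apply, hZP z hz]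
    rw [ContinuousLinearMap.coe_coe, h1]
    apply hkerQ
    rw [map_sub, hQQ, sub_self]
  -- range of P₁ is Y
  have hrange : Set.range ⇑P₁ = (Y : Set X) := by
    ext x
    constructor
    · rintro ⟨v, rfl⟩
      rw [hP₁apply v, hYset]
      exact ⟨P ((↑u⁻¹ : X →L[𝕜] X) v), ⟨_, rfl⟩, rfl⟩
    · intro hx
      rw [hYset] at hx
      obtain ⟨z, hz, rfl⟩ := hx
      refine ⟨(↑u : X →L[𝕜] X) z, ?_⟩
      rw [hP₁apply, hu'u z, hZP z hz]
  exact ⟨Y, hYclosed, hfdY, hYW, P₀, P₁, hP₀comp, hP₁comp, hsum, hP₀norm,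
    le_trans hP₁norm (by rw [hrdef]; linarith), hrange⟩
end

section
/- Let X be a Banach space over 𝕂 ∈ {ℝ, ℂ}, let N, n ∈ ℕ, let α > 0, and let F₁, …, F_n be nonempty subsets of the closed unit ball of X such that for every choice (x_i)_{i=1}^n ∈ ∏_{i=1}^n F_i the weakly 1-summing norm satisfies ‖(x_i)_{i=1}^n‖_1^w ≤ α. Then for every choice of elements x_{ij} ∈ F_i (1 ≤ i ≤ n, 1 ≤ j ≤ N) and every continuous N-linear form B : X^N → 𝕂 with ‖B‖ ≤ 1 (i.e., |B(z₁,…,z_N)| ≤ ∏_j ‖z_j‖ for all z_j ∈ X), one has ∑_{i=1}^n |B(x_{i1}, …, x_{iN})| ≤ α^N. -/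
open NormedSpace

set_option maxHeartbeats 1000000

open NormedSpace Finset

section Aux
variable {𝕜 : Type} [RCLike 𝕜] {X : Type} [NormedAddCommGroup X] [NormedSpace 𝕜 X]

/-- sign of a boolean, as a scalar -/
def sgnK (𝕜 : Type) [RCLike 𝕜] (b : Bool) : 𝕜 := if b then 1 else -1

lemma norm_sgnK (b : Bool) : ‖(sgnK 𝕜 b)‖ = 1 := by cases b <;> simp [sgnK]

lemma sgnK_mul_self (b : Bool) : (sgnK 𝕜 b) * sgnK 𝕜 b = 1 := by cases b <;> simp [sgnK]

lemma orthK {n : ℕ} {i i' : Fin n} (h : i ≠ i') :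
    ∑ b : Fin n → Bool, (sgnK 𝕜 (b i)) * sgnK 𝕜 (b i') = 0 := by
  apply Finset.sum_ninvolution (g := fun b => Function.update b i (!(b i)))
  · intro b
    have h1 : Function.update b i (!(b i)) i = !(b i) := by simp
    have h2 : Function.update b i (!(b i)) i' = b i' := by
      simp [Function.update_of_ne (Ne.symm h)]
    rw [h1, h2]
    cases b i <;> cases b i' <;> simp [sgnK] <;> ring
  · intro b _ hb
    have := congrFun hb i
    simp at this
  · intro b; simp
  · intro b
    funext j
    by_cases hj : j = i
    · subst hj; simp
    · simp [Function.update_of_ne hj]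

lemma orthK_diag {n : ℕ} (i : Fin n) :
    ∑ b : Fin n → Bool, (sgnK 𝕜 (b i)) * sgnK 𝕜 (b i) = (2 ^ n : 𝕜) := by
  have : ∀ b : Fin n → Bool, (sgnK 𝕜 (b i)) * sgnK 𝕜 (b i) = 1 := fun b => sgnK_mul_self _
  rw [Finset.sum_congr rfl fun b _ => this b]
  simp [Finset.card_univ]

lemma keyK (α : ℝ) (hα : 0 ≤ α) :
    ∀ (M : ℕ) {n : ℕ} (x : Fin n → Fin (M + 1) → X)
      (_ : ∀ (j : Fin (M + 1)) (l : Fin n → 𝕜), (∀ i, ‖l i‖ ≤ 1) →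
        ‖∑ i, l i • x i j‖ ≤ α)
      (C : ℝ) (_ : 0 ≤ C)
      (B : ContinuousMultilinearMap 𝕜 (fun _ : Fin (M + 1) => X) 𝕜)
      (_ : ∀ z, ‖B z‖ ≤ C * ∏ j, ‖z j‖)
      (c : Fin n → 𝕜) (_ : ∀ i, ‖c i‖ ≤ 1),
      ‖∑ i, c i * B (x i)‖ ≤ C * α ^ (M + 1) := by
  intro M
  induction M with
  | zero =>
    intro n x hx C hC B hB c hc
    have hL : ∀ v : Fin 1 → X, B v = (continuousMultilinearCurryFin1 𝕜 X 𝕜 B) (v 0) := by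
      intro v
      rw [continuousMultilinearCurryFin1_apply]
      congr 1
      funext j
      have : j = 0 := Subsingleton.elim _ _
      subst this
      simp [Fin.snoc]
    set L := continuousMultilinearCurryFin1 𝕜 X 𝕜 B with hLdef
    have h1 : ∑ i, c i * B (x i) = L (∑ i, c i • x i 0) := by
      rw [map_sum]
      exact Finset.sum_congr rfl fun i _ => by rw [hL (x i), map_smul]; simp
    rw [h1, pow_one]
    calc ‖L (∑ i, c i • x i 0)‖ ≤ C * ‖∑ i, c i • x i 0‖ := by
          have := hB (fun _ => ∑ i, c i • x i 0)
          rw [hL] at this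
          simpa using this
      _ ≤ C * α := by
          exact mul_le_mul_of_nonneg_left (hx 0 c hc) hC
  | succ M ih =>
    intro n x hx C hC B hB c hc
    set L := B.curryLeft with hLdef
    have hL : ∀ (v : X) (z : Fin (M+1) → X), L v z = B (Fin.cons v z) := fun v z => rfl
    set u : (Fin n → Bool) → X := fun b => ∑ i, (sgnK 𝕜 (b i)) • x i 0 with hu
    have hunorm : ∀ b, ‖u b‖ ≤ α := fun b => hx 0 _ (fun i => le_of_eq (norm_sgnK _))
    set x' : Fin n → Fin (M + 1) → X := fun i j => x i j.succ with hx'def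
    have hx' : ∀ (j : Fin (M + 1)) (l : Fin n → 𝕜), (∀ i, ‖l i‖ ≤ 1) →
        ‖∑ i, l i • x' i j‖ ≤ α := fun j l hl => hx j.succ l hl
    -- bound for each b
    have hbound : ∀ b : Fin n → Bool,
        ‖∑ i, (c i * sgnK 𝕜 (b i)) * (L (u b)) (x' i)‖ ≤ (C * α) * α ^ (M + 1) := by
      intro b
      refine ih x' hx' (C * α) (mul_nonneg hC hα) (L (u b)) ?_ _ ?_
      · intro z
        rw [hL]
        have h1 := hB (Fin.cons (u b) z)
        have hp : (∏ j : Fin (M + 1 + 1), ‖(Fin.cons (u b) z : Fin (M + 1 + 1) → X) j‖)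
            = ‖u b‖ * ∏ j : Fin (M + 1), ‖z j‖ := by
          rw [Fin.prod_univ_succ
            (fun j : Fin (M + 1 + 1) => ‖(Fin.cons (u b) z : Fin (M + 1 + 1) → X) j‖)]
          simp
        rw [hp] at h1
        refine h1.trans ?_
        rw [mul_assoc]
        refine mul_le_mul_of_nonneg_left ?_ hC
        exact mul_le_mul_of_nonneg_right (hunorm b)
          (Finset.prod_nonneg fun _ _ => norm_nonneg _)
      · intro i
        calc ‖c i * sgnK 𝕜 (b i)‖ = ‖c i‖ * ‖sgnK 𝕜 (b i)‖ := norm_mul _ _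
          _ ≤ 1 := by rw [norm_sgnK]; simpa using hc i
    -- the key identity
    have hkey : ∑ b : Fin n → Bool, ∑ i, (c i * sgnK 𝕜 (b i)) * (L (u b)) (x' i)
        = (2 ^ n : 𝕜) * ∑ i, c i * B (x i) := by
      have hexp : ∀ (b : Fin n → Bool) (i : Fin n),
          (L (u b)) (x' i) = ∑ i', sgnK 𝕜 (b i') * (L (x i' 0)) (x' i) := by
        intro b i
        rw [hu]
        simp only [map_sum, map_smul]
        rw [ContinuousMultilinearMap.sum_apply]
        exact Finset.sum_congr rfl fun i' _ => by
          rw [ContinuousMultilinearMap.smul_apply, smul_eq_mul]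
      calc ∑ b : Fin n → Bool, ∑ i, (c i * sgnK 𝕜 (b i)) * (L (u b)) (x' i)
          = ∑ b : Fin n → Bool, ∑ i, ∑ i',
              (sgnK 𝕜 (b i) * sgnK 𝕜 (b i')) * (c i * (L (x i' 0)) (x' i)) := by
            refine Finset.sum_congr rfl fun b _ => Finset.sum_congr rfl fun i _ => ?_
            rw [hexp b i, Finset.mul_sum]
            exact Finset.sum_congr rfl fun i' _ => by ring
        _ = ∑ i, ∑ i', (∑ b : Fin n → Bool, sgnK 𝕜 (b i) * sgnK 𝕜 (b i'))
              * (c i * (L (x i' 0)) (x' i)) := by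
            rw [Finset.sum_comm]
            refine Finset.sum_congr rfl fun i _ => ?_
            rw [Finset.sum_comm]
            exact Finset.sum_congr rfl fun i' _ => (Finset.sum_mul _ _ _).symm
        _ = ∑ i, (2 ^ n : 𝕜) * (c i * B (x i)) := by
            refine Finset.sum_congr rfl fun i _ => ?_
            rw [Finset.sum_eq_single i]
            · rw [orthK_diag]
              congr 2
              rw [hL]
              congr 1
              exact Fin.cons_self_tail (x i)
            · intro i' _ hne
              rw [orthK (Ne.symm hne), zero_mul]
            · intro h; exact absurd (Finset.mem_univ i) h
        _ = (2 ^ n : 𝕜) * ∑ i, c i * B (x i) := (Finset.mul_sum _ _ _).symm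
    -- conclude
    have h2n : (0:ℝ) < 2 ^ n := by positivity
    have hnorm : (2 ^ n : ℝ) * ‖∑ i, c i * B (x i)‖
        ≤ (2 ^ n : ℝ) * (C * α ^ (M + 2)) := by
      calc (2 ^ n : ℝ) * ‖∑ i, c i * B (x i)‖
          = ‖(2 ^ n : 𝕜) * ∑ i, c i * B (x i)‖ := by
            rw [norm_mul]
            congr 1
            rw [show ((2:𝕜) ^ n) = ((2 ^ n : ℝ) : 𝕜) by push_cast; ring]
            rw [RCLike.norm_ofReal, abs_of_pos h2n]
        _ = ‖∑ b : Fin n → Bool, ∑ i, (c i * sgnK 𝕜 (b i)) * (L (u b)) (x' i)‖ := by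
            rw [hkey]
        _ ≤ ∑ b : Fin n → Bool, ‖∑ i, (c i * sgnK 𝕜 (b i)) * (L (u b)) (x' i)‖ :=
            norm_sum_le _ _
        _ ≤ ∑ _b : Fin n → Bool, (C * α) * α ^ (M + 1) :=
            Finset.sum_le_sum fun b _ => hbound b
        _ = (2 ^ n : ℝ) * (C * α ^ (M + 2)) := by
            rw [Finset.sum_const, Finset.card_univ]
            simp [Fintype.card_fun]
            ring
    exact le_of_mul_le_mul_left hnorm h2n

end Aux

/-- If `F₁, …, F_n` are nonempty subsets of the unit ball of `X` such that every selection
`(x_i) ∈ ∏ F_i` has weakly 1-summing norm at most `α`, then for any choices `x_{ij} ∈ F_i` and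
any `N`-linear form `B` of norm at most one, `∑_i |B(x_{i1}, …, x_{iN})| ≤ α^N`; that is,
`‖(x_{i1} ⊗ ⋯ ⊗ x_{iN})_{i=1}^n‖_1^w ≤ α^N` in the projective tensor product. -/
theorem stmt_16 {𝕜 : Type} [RCLike 𝕜] {X : Type}
    [NormedAddCommGroup X] [NormedSpace 𝕜 X] [CompleteSpace X]
    (N n : ℕ) (hN : 0 < N) (α : ℝ) (hα : 0 < α)
    (F : Fin n → Set X) (hFne : ∀ i, (F i).Nonempty)
    (hFball : ∀ i, F i ⊆ Metric.closedBall (0 : X) 1)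
    (hweak : ∀ x : Fin n → X, (∀ i, x i ∈ F i) →
      ∀ f : StrongDual 𝕜 X, ‖f‖ ≤ 1 → ∑ i, ‖f (x i)‖ ≤ α)
    (x : Fin n → Fin N → X) (hx : ∀ i j, x i j ∈ F i)
    (B : ContinuousMultilinearMap 𝕜 (fun _ : Fin N => X) 𝕜)
    (hB : ∀ z : Fin N → X, ‖B z‖ ≤ ∏ j, ‖z j‖) :
    ∑ i, ‖B (x i)‖ ≤ α ^ N := by
  obtain ⟨M, rfl⟩ := Nat.exists_eq_succ_of_ne_zero hN.ne'
  -- columns satisfy the combination bound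
  have hcol : ∀ (j : Fin (M + 1)) (l : Fin n → 𝕜), (∀ i, ‖l i‖ ≤ 1) →
      ‖∑ i, l i • x i j‖ ≤ α := by
    intro j l hl
    refine NormedSpace.norm_le_dual_bound 𝕜 _ hα.le fun f => ?_
    have hsum : ∀ g : StrongDual 𝕜 X, ‖g (∑ i, l i • x i j)‖ ≤ ∑ i, ‖g (x i j)‖ := by
      intro g
      rw [map_sum]
      refine (norm_sum_le _ _).trans (Finset.sum_le_sum fun i _ => ?_)
      rw [map_smul, smul_eq_mul, norm_mul]
      exact mul_le_of_le_one_left (norm_nonneg _) (hl i)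
    by_cases hf : f = 0
    · subst hf; simp
    · have hfpos : (0:ℝ) < ‖f‖ := norm_pos_iff.mpr hf
      have hg : ‖(‖f‖⁻¹ : 𝕜) • f‖ ≤ 1 := by
        rw [norm_smul]
        simp [norm_inv, inv_mul_cancel₀ hfpos.ne']
      have := hweak (fun i => x i j) (fun i => hx i j) ((‖f‖⁻¹ : 𝕜) • f) hg
      have heq : ∀ i, ‖((‖f‖⁻¹ : 𝕜) • f) (x i j)‖ = ‖f‖⁻¹ * ‖f (x i j)‖ := by
        intro i
        rw [ContinuousLinearMap.smul_apply, norm_smul]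
        simp
      rw [Finset.sum_congr rfl fun i _ => heq i, ← Finset.mul_sum] at this
      have h2 : ∑ i, ‖f (x i j)‖ ≤ α * ‖f‖ := by
        have := (mul_le_mul_of_nonneg_left this hfpos.le)
        rwa [← mul_assoc, mul_inv_cancel₀ hfpos.ne', one_mul, mul_comm ‖f‖ α] at this
      exact (hsum f).trans h2
  -- phases
  classical
  set c : Fin n → 𝕜 := fun i =>
    if h : B (x i) = 0 then 1 else (‖B (x i)‖ : 𝕜) / B (x i) with hc_def
  have hc : ∀ i, ‖c i‖ ≤ 1 := by
    intro i
    rw [hc_def]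
    by_cases h : B (x i) = 0
    · simp [h]
    · simp only [h, dif_neg, not_false_iff]
      rw [norm_div, RCLike.norm_ofReal, abs_of_nonneg (norm_nonneg _)]
      rw [div_self (norm_ne_zero_iff.mpr h)]
  have hcB : ∀ i, c i * B (x i) = ((‖B (x i)‖ : ℝ) : 𝕜) := by
    intro i
    rw [hc_def]
    by_cases h : B (x i) = 0
    · simp [h]
    · simp only [h, dif_neg, not_false_iff]
      rw [div_mul_cancel₀ _ h]
  have hkey := keyK (𝕜 := 𝕜) (X := X) α hα.le M x hcol 1 zero_le_one B
    (fun z => by rw [one_mul]; exact hB z) c hc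
  rw [Finset.sum_congr rfl fun i _ => hcB i] at hkey
  rw [one_mul] at hkey
  have : ‖∑ i, ((‖B (x i)‖ : ℝ) : 𝕜)‖ = ∑ i, ‖B (x i)‖ := by
    rw [show ∑ i, ((‖B (x i)‖ : ℝ) : 𝕜) = (((∑ i, ‖B (x i)‖ : ℝ)) : 𝕜) by push_cast; ring]
    rw [RCLike.norm_ofReal, abs_of_nonneg (Finset.sum_nonneg fun i _ => norm_nonneg _)]
  rwa [this] at hkey
end

section
/- Let X be a Banach space over 𝕂 ∈ {ℝ, ℂ}, let N, n ∈ ℕ, let α > 0, and let F₁, …, F_n be nonempty subsets of the closed unit ball of X such that for every choice (x_i)_{i=1}^n ∈ ∏_{i=1}^n F_i the weakly 1-summing norm satisfies ‖(x_i)_{i=1}^n‖_1^w ≤ α. For each 1 ≤ i ≤ n let K_i ∈ ℕ, let w_{i1}, …, w_{iK_i} ≥ 0 with ∑_{k=1}^{K_i} w_{ik} = 1, and let x^{(k)}_{ij} ∈ F_i for 1 ≤ k ≤ K_i and 1 ≤ j ≤ N. Then for every continuous N-linear form B : X^N → 𝕂 with ‖B‖ ≤ 1, one has ∑_{i=1}^n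 | ∑_{k=1}^{K_i} w_{ik} B(x^{(k)}_{i1}, …, x^{(k)}_{iN}) | ≤ α^N. -/
open NormedSpace

open Finset in
/-- sign function Bool → 𝕜 -/
noncomputable def sgn (𝕜 : Type) [RCLike 𝕜] (b : Bool) : 𝕜 := if b then 1 else -1

lemma sgn_norm {𝕜 : Type} [RCLike 𝕜] (b : Bool) : ‖sgn 𝕜 b‖ = 1 := by
  cases b <;> simp [sgn]

lemma sgn_mul_self {𝕜 : Type} [RCLike 𝕜] (b : Bool) : sgn 𝕜 b * sgn 𝕜 b = 1 := by
  cases b <;> simp [sgn]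

lemma sgn_not {𝕜 : Type} [RCLike 𝕜] (b : Bool) : sgn 𝕜 (!b) = - sgn 𝕜 b := by
  cases b <;> simp [sgn]

/-- orthogonality of Rademacher signs -/
lemma sgn_orth {𝕜 : Type} [RCLike 𝕜] {n : ℕ} (i i' : Fin n) :
    ∑ ε : Fin n → Bool, sgn 𝕜 (ε i) * sgn 𝕜 (ε i')
      = if i = i' then (2 ^ n : 𝕜) else 0 := by
  rcases eq_or_ne i i' with rfl | hne
  · simp only [if_pos rfl, sgn_mul_self, Finset.sum_const, Finset.card_univ,
      Fintype.card_fun, Fintype.card_bool, Fintype.card_fin, nsmul_eq_mul, mul_one]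
    push_cast; ring
  · rw [if_neg hne]
    apply Finset.sum_ninvolution (fun ε => Function.update ε i (! ε i))
    · intro ε
      have h1 : Function.update ε i (! ε i) i = ! ε i := by simp
      have h2 : Function.update ε i (! ε i) i' = ε i' := by
        simp [Function.update_of_ne (Ne.symm hne)]
      rw [h1, h2, sgn_not]
      ring
    · intro ε _ h
      have := congrFun h i
      simp at this
    · intro ε; exact Finset.mem_univ _
    · intro ε
      funext j
      rcases eq_or_ne j i with rfl | hj
      · simp
      · simp [Function.update_of_ne hj]

/-- phase choice -/
lemma exists_phase {𝕜 : Type} [RCLike 𝕜] (z : 𝕜) :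
    ∃ c : 𝕜, ‖c‖ = 1 ∧ c * z = (‖z‖ : 𝕜) := by
  rcases eq_or_ne z 0 with rfl | hz
  · exact ⟨1, by simp, by simp⟩
  · refine ⟨(‖z‖ : 𝕜) / z, ?_, ?_⟩
    · rw [norm_div, RCLike.norm_ofReal, abs_of_nonneg (norm_nonneg z),
        div_self (norm_ne_zero_iff.2 hz)]
    · field_simp


variable {𝕜 : Type} [RCLike 𝕜] {X : Type} [NormedAddCommGroup X] [NormedSpace 𝕜 X]

lemma normsum {n : ℕ} {α : ℝ} (hα : 0 < α) {F : Fin n → Set X}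
    (hweak : ∀ x : Fin n → X, (∀ i, x i ∈ F i) →
      ∀ f : StrongDual 𝕜 X, ‖f‖ ≤ 1 → ∑ i, ‖f (x i)‖ ≤ α)
    (a : Fin n → 𝕜) (ha : ∀ i, ‖a i‖ ≤ 1) (z : Fin n → X) (hz : ∀ i, z i ∈ F i) :
    ‖∑ i, a i • z i‖ ≤ α := by
  rcases eq_or_ne (∑ i, a i • z i) 0 with h | h
  · rw [h, norm_zero]; exact hα.le
  · obtain ⟨g, hg1, hgx⟩ := exists_dual_vector 𝕜 _ (norm_ne_zero_iff.2 h)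
    have he : (‖∑ i, a i • z i‖ : ℝ) = ‖g (∑ i, a i • z i)‖ := by
      rw [hgx, RCLike.norm_ofReal, abs_of_nonneg (norm_nonneg _)]
    rw [he, map_sum]
    calc ‖∑ i, g (a i • z i)‖ ≤ ∑ i, ‖g (a i • z i)‖ := norm_sum_le _ _
      _ ≤ ∑ i, ‖g (z i)‖ := by
          apply Finset.sum_le_sum; intro i _
          rw [map_smul, norm_smul]
          exact mul_le_of_le_one_left (norm_nonneg _) (ha i)
      _ ≤ α := hweak z hz g hg1.le


lemma key {n : ℕ} {α : ℝ} (hα : 0 < α) {F : Fin n → Set X}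
    (hweak : ∀ x : Fin n → X, (∀ i, x i ∈ F i) →
      ∀ f : StrongDual 𝕜 X, ‖f‖ ≤ 1 → ∑ i, ‖f (x i)‖ ≤ α) :
    ∀ (m : ℕ) (C : ℝ), 0 ≤ C →
      ∀ B : ContinuousMultilinearMap 𝕜 (fun _ : Fin (m+1) => X) 𝕜,
        (∀ z, ‖B z‖ ≤ C * ∏ j, ‖z j‖) →
      ∀ y : Fin n → Fin (m+1) → X, (∀ i j, y i j ∈ F i) →
        ∑ i, ‖B (y i)‖ ≤ C * α ^ (m+1) := by
  intro m
  induction m with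
  | zero =>
    intro C hC B hB y hy
    rcases eq_or_lt_of_le hC with hC0 | hC0
    · have hz : ∀ i, ‖B (y i)‖ = 0 := by
        intro i
        refine le_antisymm ?_ (norm_nonneg _)
        simpa [← hC0] using hB (y i)
      simp [hz, ← hC0]
    · set f := B.toContinuousLinearMap (fun _ => (0:X)) 0 with hf
      have hfapp : ∀ x : X, f x = B (fun _ => x) := by
        intro x
        have hu : Function.update (fun _ : Fin (0+1) => (0:X)) 0 x = fun _ => x := by
          funext j
          fin_cases j
          simp
        rw [hf, ContinuousMultilinearMap.toContinuousLinearMap_apply, hu]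
      have hfy : ∀ i, B (y i) = f (y i 0) := by
        intro i
        rw [hfapp]
        congr 1
        funext j
        fin_cases j
        rfl
      have hfx : ∀ x : X, ‖f x‖ ≤ C * ‖x‖ := by
        intro x
        rw [hfapp]
        calc ‖B (fun _ => x)‖ ≤ C * ∏ _j : Fin (0+1), ‖x‖ := hB _
          _ = C * ‖x‖ := by simp
      have hg : ‖(C : 𝕜)⁻¹ • f‖ ≤ 1 := by
        apply ContinuousLinearMap.opNorm_le_bound _ zero_le_one
        intro x
        rw [ContinuousLinearMap.smul_apply, norm_smul, norm_inv, RCLike.norm_ofReal,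
          abs_of_pos hC0, one_mul]
        calc C⁻¹ * ‖f x‖ ≤ C⁻¹ * (C * ‖x‖) := by
              exact mul_le_mul_of_nonneg_left (hfx x) (by positivity)
          _ = ‖x‖ := by field_simp
      have h1 := hweak (fun i => y i 0) (fun i => hy i 0) ((C : 𝕜)⁻¹ • f) hg
      have h2 : ∀ i, ‖((C : 𝕜)⁻¹ • f) (y i 0)‖ = C⁻¹ * ‖f (y i 0)‖ := by
        intro i
        rw [ContinuousLinearMap.smul_apply, norm_smul, norm_inv, RCLike.norm_ofReal,
          abs_of_pos hC0]
      rw [Finset.sum_congr rfl (fun i _ => h2 i), ← Finset.mul_sum] at h1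
      have := mul_le_mul_of_nonneg_left h1 hC0.le
      rw [← mul_assoc, mul_inv_cancel₀ hC0.ne', one_mul] at this
      calc ∑ i, ‖B (y i)‖ = ∑ i, ‖f (y i 0)‖ := by
            exact Finset.sum_congr rfl fun i _ => by rw [hfy i]
        _ ≤ C * α := this
        _ = C * α ^ (0 + 1) := by rw [pow_one]
  | succ m ih =>
    intro C hC B hB y hy
    choose c hc1 hc2 using fun i => exists_phase (B (y i))
    set S : ℝ := ∑ i, ‖B (y i)‖ with hSdef
    have hS0 : 0 ≤ S := Finset.sum_nonneg fun i _ => norm_nonneg _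
    set v : (Fin n → Bool) → X := fun ε => ∑ i, sgn 𝕜 (ε i) • y i 0 with hv
    have hvα : ∀ ε, ‖v ε‖ ≤ α := fun ε =>
      normsum hα hweak _ (fun i => (sgn_norm (ε i)).le) _ (fun i => hy i 0)
    have hcurry : ∀ (u : X) (z : Fin (m+1) → X), B.curryLeft u z = B (Fin.cons u z) :=
      fun u z => rfl
    have hBε : ∀ ε, ∀ z : Fin (m+1) → X,
        ‖B.curryLeft (v ε) z‖ ≤ (C * α) * ∏ j, ‖z j‖ := by
      intro ε z
      rw [hcurry]
      calc ‖B (Fin.cons (v ε) z)‖ ≤ C * ∏ j, ‖(Fin.cons (v ε) z : Fin (m+1+1) → X) j‖ := hB _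
        _ = C * (‖v ε‖ * ∏ j : Fin (m+1), ‖z j‖) := by
            rw [Fin.prod_univ_succ]
            simp
        _ ≤ C * (α * ∏ j, ‖z j‖) := by
            refine mul_le_mul_of_nonneg_left ?_ hC
            exact mul_le_mul_of_nonneg_right (hvα ε)
              (Finset.prod_nonneg fun j _ => norm_nonneg _)
        _ = (C * α) * ∏ j, ‖z j‖ := by ring
    have hTband : ∀ ε, ‖∑ i, sgn 𝕜 (ε i) * c i * B.curryLeft (v ε) (Fin.tail (y i))‖
        ≤ (C * α) * α ^ (m+1) := by
      intro ε
      calc ‖∑ i, sgn 𝕜 (ε i) * c i * B.curryLeft (v ε) (Fin.tail (y i))‖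
          ≤ ∑ i, ‖sgn 𝕜 (ε i) * c i * B.curryLeft (v ε) (Fin.tail (y i))‖ := norm_sum_le _ _
        _ = ∑ i, ‖B.curryLeft (v ε) (Fin.tail (y i))‖ := by
            refine Finset.sum_congr rfl fun i _ => ?_
            rw [norm_mul, norm_mul, sgn_norm, hc1, one_mul, one_mul]
        _ ≤ (C * α) * α ^ (m+1) :=
            ih (C * α) (by positivity) (B.curryLeft (v ε)) (hBε ε) _ (fun i j => hy i j.succ)
    have hid : ∑ ε : Fin n → Bool, ∑ i, sgn 𝕜 (ε i) * c i * B.curryLeft (v ε) (Fin.tail (y i))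
        = (2^n : 𝕜) * (S : 𝕜) := by
      have step1 : ∀ (ε : Fin n → Bool) (i : Fin n),
          sgn 𝕜 (ε i) * c i * B.curryLeft (v ε) (Fin.tail (y i))
          = ∑ i', (sgn 𝕜 (ε i) * sgn 𝕜 (ε i'))
              * (c i * B (Fin.cons (y i' 0) (Fin.tail (y i)))) := by
        intro ε i
        have e1 : B.curryLeft (v ε) = ∑ i', sgn 𝕜 (ε i') • B.curryLeft (y i' 0) := by
          rw [hv, map_sum]
          exact Finset.sum_congr rfl fun i' _ => by rw [map_smul]
        rw [e1, ContinuousMultilinearMap.sum_apply, Finset.mul_sum]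
        refine Finset.sum_congr rfl fun i' _ => ?_
        rw [ContinuousMultilinearMap.smul_apply, smul_eq_mul, hcurry]
        ring
      calc ∑ ε : Fin n → Bool, ∑ i, sgn 𝕜 (ε i) * c i * B.curryLeft (v ε) (Fin.tail (y i))
          = ∑ ε : Fin n → Bool, ∑ i, ∑ i', (sgn 𝕜 (ε i) * sgn 𝕜 (ε i'))
              * (c i * B (Fin.cons (y i' 0) (Fin.tail (y i)))) :=
            Finset.sum_congr rfl fun ε _ => Finset.sum_congr rfl fun i _ => step1 ε i
        _ = ∑ i, ∑ i', (∑ ε : Fin n → Bool, sgn 𝕜 (ε i) * sgn 𝕜 (ε i'))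
              * (c i * B (Fin.cons (y i' 0) (Fin.tail (y i)))) := by
            rw [Finset.sum_comm]
            refine Finset.sum_congr rfl fun i _ => ?_
            rw [Finset.sum_comm]
            exact Finset.sum_congr rfl fun i' _ => (Finset.sum_mul _ _ _).symm
        _ = ∑ i, (2^n : 𝕜) * (c i * B (y i)) := by
            refine Finset.sum_congr rfl fun i _ => ?_
            have : ∀ i' : Fin n, (∑ ε : Fin n → Bool, sgn 𝕜 (ε i) * sgn 𝕜 (ε i'))
                * (c i * B (Fin.cons (y i' 0) (Fin.tail (y i))))
                = (if i = i' then (2^n : 𝕜) * (c i * B (Fin.cons (y i' 0) (Fin.tail (y i)))) else 0) := by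
              intro i'
              rw [sgn_orth, ite_mul, zero_mul]
            rw [Finset.sum_congr rfl fun i' _ => this i', Finset.sum_ite_eq]
            simp [Fin.cons_self_tail]
        _ = (2^n : 𝕜) * (S : 𝕜) := by
            rw [← Finset.mul_sum]
            congr 1
            rw [hSdef]
            push_cast
            exact Finset.sum_congr rfl fun i _ => hc2 i
    have h2n : (0:ℝ) < 2^n := by positivity
    have hnorm : (2:ℝ)^n * S
        = ‖∑ ε : Fin n → Bool, ∑ i, sgn 𝕜 (ε i) * c i * B.curryLeft (v ε) (Fin.tail (y i))‖ := by
      rw [hid, norm_mul]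
      have e2 : ‖(2^n : 𝕜)‖ = (2:ℝ)^n := by
        rw [norm_pow]
        norm_num
      have e3 : ‖((S:ℝ) : 𝕜)‖ = S := by
        rw [RCLike.norm_ofReal, abs_of_nonneg hS0]
      rw [e2, e3]
    have hfin : (2:ℝ)^n * S ≤ (2:ℝ)^n * ((C * α) * α ^ (m+1)) := by
      rw [hnorm]
      calc ‖∑ ε : Fin n → Bool, ∑ i, sgn 𝕜 (ε i) * c i * B.curryLeft (v ε) (Fin.tail (y i))‖
          ≤ ∑ ε : Fin n → Bool, ‖∑ i, sgn 𝕜 (ε i) * c i * B.curryLeft (v ε) (Fin.tail (y i))‖ :=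
            norm_sum_le _ _
        _ ≤ ∑ _ε : Fin n → Bool, (C * α) * α ^ (m+1) :=
            Finset.sum_le_sum fun ε _ => hTband ε
        _ = (2:ℝ)^n * ((C * α) * α ^ (m+1)) := by
            rw [Finset.sum_const, Finset.card_univ, Fintype.card_fun, Fintype.card_bool,
              Fintype.card_fin, nsmul_eq_mul]
            push_cast
            ring
    have hfin2 : S ≤ (C * α) * α ^ (m+1) := le_of_mul_le_mul_left hfin h2n
    calc ∑ i, ‖B (y i)‖ = S := hSdef.symm
      _ ≤ (C * α) * α ^ (m+1) := hfin2
      _ = C * α ^ (m+1+1) := by ring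


/-- If `F₁, …, F_n` are nonempty subsets of the unit ball of `X` such that every selection
`(x_i) ∈ ∏ F_i` has weakly 1-summing norm at most `α`, then for convex combinations
`v_i = ∑_k w_{ik} x^{(k)}_{i1} ⊗ ⋯ ⊗ x^{(k)}_{iN}` with `x^{(k)}_{ij} ∈ F_i`, and any
`N`-linear form `B` of norm at most one, `∑_i |∑_k w_{ik} B(x^{(k)}_{i1}, …, x^{(k)}_{iN})| ≤ α^N`;
that is, `‖(v_i)_{i=1}^n‖_1^w ≤ α^N` in the projective tensor product. -/
theorem stmt_17 {𝕜 : Type} [RCLike 𝕜] {X : Type}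
    [NormedAddCommGroup X] [NormedSpace 𝕜 X] [CompleteSpace X]
    (N n : ℕ) (hN : 0 < N) (α : ℝ) (hα : 0 < α)
    (F : Fin n → Set X) (hFne : ∀ i, (F i).Nonempty)
    (hFball : ∀ i, F i ⊆ Metric.closedBall (0 : X) 1)
    (hweak : ∀ x : Fin n → X, (∀ i, x i ∈ F i) →
      ∀ f : StrongDual 𝕜 X, ‖f‖ ≤ 1 → ∑ i, ‖f (x i)‖ ≤ α)
    (K : Fin n → ℕ) (w : ∀ i : Fin n, Fin (K i) → ℝ)
    (hw0 : ∀ i k, 0 ≤ w i k) (hw1 : ∀ i, ∑ k, w i k = 1)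
    (x : ∀ i : Fin n, Fin (K i) → Fin N → X) (hx : ∀ i k j, x i k j ∈ F i)
    (B : ContinuousMultilinearMap 𝕜 (fun _ : Fin N => X) 𝕜)
    (hB : ∀ z : Fin N → X, ‖B z‖ ≤ ∏ j, ‖z j‖) :
    ∑ i, ‖∑ k, ((w i k : ℝ) : 𝕜) * B (x i k)‖ ≤ α ^ N := by
  obtain ⟨m, rfl⟩ : ∃ m, N = m + 1 := ⟨N - 1, (Nat.succ_pred_eq_of_pos hN).symm⟩
  have hK : ∀ i, 0 < K i := by
    intro i
    rcases Nat.eq_zero_or_pos (K i) with h | h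
    · exfalso
      have h1 := hw1 i
      have h2 : (∑ k : Fin (K i), w i k) = 0 := by
        have : IsEmpty (Fin (K i)) := by rw [h]; exact Fin.isEmpty'
        exact Finset.sum_of_isEmpty _
      rw [h2] at h1
      norm_num at h1
    · exact h
  have hselx : ∀ i, ∃ k : Fin (K i), ∀ k', ‖B (x i k')‖ ≤ ‖B (x i k)‖ := by
    intro i
    obtain ⟨k, -, hk⟩ := Finset.exists_max_image Finset.univ (fun k => ‖B (x i k)‖)
      ⟨⟨0, hK i⟩, Finset.mem_univ _⟩
    exact ⟨k, fun k' => hk k' (Finset.mem_univ _)⟩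
  choose sel hsel using hselx
  calc ∑ i, ‖∑ k, ((w i k : ℝ) : 𝕜) * B (x i k)‖
      ≤ ∑ i, ∑ k, w i k * ‖B (x i k)‖ := by
        refine Finset.sum_le_sum fun i _ => ?_
        calc ‖∑ k, ((w i k : ℝ) : 𝕜) * B (x i k)‖
            ≤ ∑ k, ‖((w i k : ℝ) : 𝕜) * B (x i k)‖ := norm_sum_le _ _
          _ = ∑ k, w i k * ‖B (x i k)‖ := Finset.sum_congr rfl fun k _ => by
              rw [norm_mul, RCLike.norm_ofReal, abs_of_nonneg (hw0 i k)]
    _ ≤ ∑ i, ‖B (x i (sel i))‖ := by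
        refine Finset.sum_le_sum fun i _ => ?_
        calc ∑ k, w i k * ‖B (x i k)‖ ≤ ∑ k, w i k * ‖B (x i (sel i))‖ :=
              Finset.sum_le_sum fun k _ => mul_le_mul_of_nonneg_left (hsel i k) (hw0 i k)
          _ = ‖B (x i (sel i))‖ := by rw [← Finset.sum_mul, hw1 i, one_mul]
    _ ≤ 1 * α ^ (m+1) :=
        key hα hweak m 1 zero_le_one B (fun z => by rw [one_mul]; exact hB z)
          (fun i => x i (sel i)) (fun i j => hx i (sel i) j)
    _ = α ^ (m+1) := one_mul _
end
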